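/- arXiv:1803.10308 — 6 statements merged into one kernel-verified Lean document; each statement's English description precedes it below -/
import Mathlib

section
/- For every integer y ≥ 1, the following identity of formal power series over ℚ[x] holds: (Σ_{n≥0} F_n(x,y) z^n/n!) · (Σ_{n≥0} (x−1)^n z^n/n! − C(x))^y = (1 − C(x))^y, where C(x) denotes the constant power series with value the polynomial x. (Equivalently, the exponential generating function of the Savage–Viswanathan polynomials F_n(x,y) is ((1−x)/(e^{z(x−1)}−x))^y.) -/
/-- Number of excedances of a permutation. -/
def exc {n : ℕ} (π : Equiv.Perm (Fin n)) : ℕ :=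
  (Finset.univ.filter fun i => i < π i).card

/-- Number of cycles of a permutation, counting fixed points as cycles. -/
def cyc {n : ℕ} (π : Equiv.Perm (Fin n)) : ℕ :=
  Multiset.card π.cycleType + (Finset.univ.filter fun i => π i = i).card

/-- The Savage–Viswanathan polynomial `F_n(x,y)` specialized at an integer `y`,
as a polynomial in `x` over `ℤ`. -/
noncomputable def SVspec (n : ℕ) (y : ℤ) : Polynomial ℤ :=
  ∑ π : Equiv.Perm (Fin n), Polynomial.C (y ^ cyc π) * Polynomial.X ^ exc π

open Finset Equiv Equiv.Perm

def invCount {n : ℕ} (π : Equiv.Perm (Fin n)) (y : ℕ) : ℕ :=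
  Fintype.card {c : Fin n → Fin y // c ∘ π = c}


lemma inv_comp_pow {n y : ℕ} {π : Equiv.Perm (Fin n)} {c : Fin n → Fin y} (h : c ∘ π = c)
    (k : ℕ) : c ∘ (π ^ k : Equiv.Perm (Fin n)) = c := by
  induction k with
  | zero => simp
  | succ m ih =>
    funext i
    have : (π ^ (m+1) : Equiv.Perm (Fin n)) i = (π ^ m) (π i) := by
      rw [pow_succ]; rfl
    simp only [Function.comp_apply, this]
    have h1 := congrFun ih (π i)
    have h2 := congrFun h i
    simp only [Function.comp_apply] at h1 h2
    rw [h1, h2]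

lemma inv_sameCycle {n y : ℕ} {π : Equiv.Perm (Fin n)} {c : Fin n → Fin y} (h : c ∘ π = c)
    {i j : Fin n} (hij : π.SameCycle i j) : c i = c j := by
  obtain ⟨k, hk⟩ := hij
  subst hk
  rcases le_or_gt 0 k with hk0 | hk0
  · lift k to ℕ using hk0
    rw [zpow_natCast]
    exact (congrFun (inv_comp_pow h k) i).symm
  · obtain ⟨m, rfl⟩ : ∃ m : ℕ, k = -(m : ℤ) := ⟨k.natAbs, by omega⟩
    rw [zpow_neg, zpow_natCast]
    have := congrFun (inv_comp_pow h m) ((π ^ m)⁻¹ i)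
    simp only [Function.comp_apply, Equiv.Perm.inv_def, Equiv.apply_symm_apply] at this
    exact this

noncomputable def colorEquiv {n y : ℕ} (π : Equiv.Perm (Fin n)) :
    {c : Fin n → Fin y // c ∘ π = c} ≃
      ((↥π.cycleFactorsFinset ⊕ {i : Fin n // π i = i}) → Fin y) where
  toFun c s :=
    match s with
    | Sum.inl g => c.1 (g.1.support.min' (by
        have hc := (mem_cycleFactorsFinset_iff.1 g.2).1
        exact hc.nonempty_support))
    | Sum.inr i => c.1 i.1
  invFun d := ⟨fun i =>
      if h : π i = i then d (Sum.inr ⟨i, h⟩)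
      else d (Sum.inl ⟨π.cycleOf i,
        cycleOf_mem_cycleFactorsFinset_iff.2 (mem_support.2 h)⟩), by
    funext i
    simp only [Function.comp_apply]
    by_cases h : π i = i
    · rw [dif_pos h, dif_pos (by rw [h]; exact h)]
      congr 2
      exact Subtype.ext h
    · rw [dif_neg (fun hh => h (π.injective hh)), dif_neg h]
      exact congrArg d (congrArg Sum.inl (Subtype.ext (cycleOf_self_apply π i)))⟩
  left_inv c := by
    apply Subtype.ext
    funext i
    by_cases h : π i = i
    · simp only [dif_pos h]
    · simp only [dif_neg h]
      have hne : (π.cycleOf i).support.Nonempty :=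
        (Equiv.Perm.isCycle_cycleOf π h).nonempty_support
      have hmem : (π.cycleOf i).support.min' hne ∈ (π.cycleOf i).support :=
        Finset.min'_mem _ _
      have hsc : π.SameCycle i ((π.cycleOf i).support.min' hne) :=
        (mem_support_cycleOf_iff.1 hmem).1
      exact (inv_sameCycle c.2 hsc).symm
  right_inv d := by
    funext s
    rcases s with g | i
    · have hne : g.1.support.Nonempty :=
        (mem_cycleFactorsFinset_iff.1 g.2).1.nonempty_support
      set j := g.1.support.min' hne with hj
      have hjs : j ∈ g.1.support := Finset.min'_mem _ _
      have hg := mem_cycleFactorsFinset_iff.1 g.2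
      have hπj : π j ≠ j := by
        have := hg.2 j hjs
        rw [← this]
        exact mem_support.1 hjs
      simp only [dif_neg hπj]
      exact (dif_neg hπj).trans <| congrArg d (congrArg Sum.inl (Subtype.ext (cycle_is_cycleOf hjs g.2).symm :
        (⟨π.cycleOf j, cycleOf_mem_cycleFactorsFinset_iff.2 (mem_support.2 hπj)⟩ :
          ↥π.cycleFactorsFinset) = g))
    · simp only [dif_pos i.2]

lemma invCount_eq {n : ℕ} (π : Equiv.Perm (Fin n)) (y : ℕ) :
    invCount π y = y ^ cyc π := by
  rw [invCount, Fintype.card_congr (colorEquiv π), Fintype.card_fun, Fintype.card_fin,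
    Fintype.card_sum, Fintype.card_coe, Fintype.card_subtype]
  congr 1
  rw [cyc, cycleType_def, Multiset.card_map]
  rfl

def invEquivZero {n y : ℕ} (σ : Equiv.Perm (Fin n)) :
    {c : Fin (n+1) → Fin y // c ∘ (Equiv.Perm.decomposeFin.symm (0, σ)) = c} ≃
      (Fin y × {d : Fin n → Fin y // d ∘ σ = d}) where
  toFun c := ⟨c.1 0, ⟨c.1 ∘ Fin.succ, by
    funext i
    have := congrFun c.2 i.succ
    simpa [Equiv.Perm.decomposeFin_symm_apply_succ] using this⟩⟩
  invFun ad := ⟨Fin.cases ad.1 ad.2.1, by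
    funext i
    induction i using Fin.cases with
    | zero => simp [Equiv.Perm.decomposeFin_symm_apply_zero]
    | succ j =>
      have := congrFun ad.2.2 j
      simpa [Equiv.Perm.decomposeFin_symm_apply_succ] using this⟩
  left_inv c := by
    apply Subtype.ext
    funext i
    induction i using Fin.cases <;> simp
  right_inv ad := by
    apply Prod.ext
    · rfl
    · apply Subtype.ext; funext j; simp

lemma invCount_zero {n y : ℕ} (σ : Equiv.Perm (Fin n)) :
    invCount (Equiv.Perm.decomposeFin.symm (0, σ)) y = y * invCount σ y := by
  unfold invCount
  rw [Fintype.card_congr (invEquivZero σ), Fintype.card_prod, Fintype.card_fin]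

def invEquivSucc {n y : ℕ} (σ : Equiv.Perm (Fin n)) (q : Fin n) :
    {c : Fin (n+1) → Fin y // c ∘ (Equiv.Perm.decomposeFin.symm (q.succ, σ)) = c} ≃
      {d : Fin n → Fin y // d ∘ σ = d} where
  toFun c := ⟨c.1 ∘ Fin.succ, by
    funext i
    simp only [Function.comp_apply]
    have hi := congrFun c.2 i.succ
    simp only [Function.comp_apply, Equiv.Perm.decomposeFin_symm_apply_succ] at hi
    by_cases h : σ i = q
    · rw [h] at hi
      rw [Equiv.swap_apply_right] at hi
      have h0 := congrFun c.2 0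
      simp only [Function.comp_apply, Equiv.Perm.decomposeFin_symm_apply_zero] at h0
      rw [h, ← hi, ← h0]
    · rw [Equiv.swap_apply_of_ne_of_ne (Fin.succ_ne_zero _) (by
        simpa [Fin.succ_inj] using h)] at hi
      exact hi⟩
  invFun d := ⟨Fin.cases (d.1 q) d.1, by
    funext i
    induction i using Fin.cases with
    | zero =>
      simp [Equiv.Perm.decomposeFin_symm_apply_zero]
    | succ j =>
      simp only [Function.comp_apply, Equiv.Perm.decomposeFin_symm_apply_succ]
      by_cases h : σ j = q
      · rw [h, Equiv.swap_apply_right]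
        have := congrFun d.2 j
        simp only [Function.comp_apply] at this
        simp only [Fin.cases_zero, Fin.cases_succ]
        rw [← this, h]
      · rw [Equiv.swap_apply_of_ne_of_ne (Fin.succ_ne_zero _) (by
          simpa [Fin.succ_inj] using h)]
        simp only [Fin.cases_succ]
        exact congrFun d.2 j⟩
  left_inv c := by
    apply Subtype.ext
    funext i
    induction i using Fin.cases with
    | zero =>
      have h0 := congrFun c.2 0
      simp only [Function.comp_apply, Equiv.Perm.decomposeFin_symm_apply_zero] at h0
      simpa using h0
    | succ j => simp
  right_inv d := by
    apply Subtype.ext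
    funext j
    simp

lemma invCount_succ {n y : ℕ} (σ : Equiv.Perm (Fin n)) (q : Fin n) :
    invCount (Equiv.Perm.decomposeFin.symm (q.succ, σ)) y = invCount σ y := by
  unfold invCount
  rw [Fintype.card_congr (invEquivSucc σ q)]

lemma card_filter_succ {n : ℕ} (P : Fin (n+1) → Prop) [DecidablePred P] :
    (Finset.univ.filter P).card =
      (if P 0 then 1 else 0) + ∑ i : Fin n, (if P i.succ then 1 else 0) := by
  rw [Finset.card_filter, Fin.sum_univ_succ]

lemma exc_decomp_zero {n : ℕ} (σ : Equiv.Perm (Fin n)) :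
    exc (Equiv.Perm.decomposeFin.symm (0, σ)) = exc σ := by
  unfold exc
  rw [card_filter_succ, Finset.card_filter]
  simp [Equiv.Perm.decomposeFin_symm_apply_zero, Equiv.Perm.decomposeFin_symm_apply_succ,
    Fin.succ_lt_succ_iff]

lemma exc_decomp_succ {n : ℕ} (σ : Equiv.Perm (Fin n)) (q : Fin n) :
    exc (Equiv.Perm.decomposeFin.symm (q.succ, σ)) =
      1 + (Finset.univ.filter fun i => i < σ i ∧ σ i ≠ q).card := by
  unfold exc
  rw [card_filter_succ, Finset.card_filter]
  congr 1
  · apply Finset.sum_congr rfl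
    intro i _
    simp only [Equiv.Perm.decomposeFin_symm_apply_succ]
    by_cases h : σ i = q
    · rw [h, Equiv.swap_apply_right, if_neg (Fin.not_lt_zero _), if_neg (by simp [h])]
    · rw [Equiv.swap_apply_of_ne_of_ne (Fin.succ_ne_zero _) (by
        simpa [Fin.succ_inj] using h)]
      simp [Fin.succ_lt_succ_iff, h]

lemma sum_q {n : ℕ} (σ : Equiv.Perm (Fin n)) :
    ∑ q : Fin n, (Polynomial.X : Polynomial ℤ) ^
        (1 + (Finset.univ.filter fun i => i < σ i ∧ σ i ≠ q).card) =
      (exc σ : Polynomial ℤ) * Polynomial.X ^ exc σ +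
        ((n : Polynomial ℤ) - (exc σ : Polynomial ℤ)) * Polynomial.X ^ (exc σ + 1) := by
  classical
  rw [← Equiv.sum_comp σ (fun q => (Polynomial.X : Polynomial ℤ) ^
      (1 + (Finset.univ.filter fun i => i < σ i ∧ σ i ≠ q).card))]
  have hfil : ∀ j : Fin n, (Finset.univ.filter fun i => i < σ i ∧ σ i ≠ σ j) =
      (Finset.univ.filter fun i => i < σ i).erase j := by
    intro j
    ext i
    simp only [Finset.mem_filter, Finset.mem_erase, Finset.mem_univ, true_and]
    rw [σ.injective.ne_iff]
    tauto
  simp only [hfil]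
  rw [← Finset.sum_filter_add_sum_filter_not Finset.univ (fun j => j < σ j)]
  have he : exc σ ≤ n := by
    simpa [exc] using Finset.card_filter_le Finset.univ (fun i => i < σ i)
  have h1 : ∑ j ∈ Finset.univ.filter (fun j => j < σ j),
      (Polynomial.X : Polynomial ℤ) ^ (1 + ((Finset.univ.filter fun i => i < σ i).erase j).card)
      = (exc σ : Polynomial ℤ) * Polynomial.X ^ exc σ := by
    rw [Finset.sum_congr rfl (fun j hj => ?_), Finset.sum_const, nsmul_eq_mul]
    · rfl
    · rw [Finset.card_erase_of_mem (by simpa using hj)]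
      congr 1
      have : 1 ≤ exc σ := Finset.card_pos.2 ⟨j, by simpa [exc] using hj⟩
      unfold exc at this ⊢
      omega
  have h2 : ∑ j ∈ Finset.univ.filter (fun j => ¬ j < σ j),
      (Polynomial.X : Polynomial ℤ) ^ (1 + ((Finset.univ.filter fun i => i < σ i).erase j).card)
      = ((n : Polynomial ℤ) - (exc σ : Polynomial ℤ)) * Polynomial.X ^ (exc σ + 1) := by
    rw [Finset.sum_congr rfl (fun j hj => ?_), Finset.sum_const, nsmul_eq_mul]
    · have hcard : (Finset.univ.filter fun j : Fin n => ¬ j < σ j).card = n - exc σ := by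
        have := Finset.card_filter_add_card_filter_not (s := (Finset.univ : Finset (Fin n)))
          (p := fun j => j < σ j)
        unfold exc
        simp only [Finset.card_univ, Fintype.card_fin] at this ⊢
        omega
      rw [hcard, Nat.cast_sub he]
    · rw [Finset.erase_eq_of_notMem (by simpa using hj)]
      rw [Nat.add_comm]
      rfl
  rw [h1, h2]

lemma invCount_eq' {n : ℕ} (π : Equiv.Perm (Fin n)) (y : ℕ) :
    invCount π y = y ^ cyc π := invCount_eq π y

lemma SV_sum_inv (n y : ℕ) :
    SVspec n (y : ℤ) =
      ∑ σ : Equiv.Perm (Fin n), ((invCount σ y : ℕ) : Polynomial ℤ) * Polynomial.X ^ exc σ := by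
  unfold SVspec
  refine Finset.sum_congr rfl fun σ _ => ?_
  rw [invCount_eq']
  push_cast
  simp [map_pow, Polynomial.C_eq_natCast]

lemma X_mul_deriv (e : ℕ) :
    (Polynomial.X : Polynomial ℤ) * Polynomial.derivative (Polynomial.X ^ e) =
      (e : Polynomial ℤ) * Polynomial.X ^ e := by
  cases e with
  | zero => simp
  | succ k =>
    rw [Polynomial.derivative_X_pow, Polynomial.C_eq_natCast]
    push_cast
    ring

lemma SV_rec (n y : ℕ) :
    SVspec (n+1) (y : ℤ) = Polynomial.C (y : ℤ) * SVspec n (y : ℤ)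
      + (n : Polynomial ℤ) * (Polynomial.X * SVspec n (y : ℤ))
      + Polynomial.X * (1 - Polynomial.X) * Polynomial.derivative (SVspec n (y : ℤ)) := by
  rw [SV_sum_inv, SV_sum_inv]
  rw [← Equiv.sum_comp (Equiv.Perm.decomposeFin (n := n)).symm
    (fun π => ((invCount π y : ℕ) : Polynomial ℤ) * Polynomial.X ^ exc π)]
  rw [Fintype.sum_prod_type]
  rw [Finset.sum_comm]
  simp only [Polynomial.derivative_sum, Finset.mul_sum, ← Finset.sum_add_distrib]
  refine Finset.sum_congr rfl fun σ _ => ?_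
  rw [Fin.sum_univ_succ]
  simp only [invCount_zero, invCount_succ, exc_decomp_zero, exc_decomp_succ]
  rw [← Finset.mul_sum, sum_q]
  rw [Polynomial.derivative_mul, Polynomial.derivative_natCast, Polynomial.C_eq_natCast]
  have hXd := X_mul_deriv (exc σ)
  push_cast
  linear_combination (-(1 - Polynomial.X) * ((invCount σ y : ℕ) : Polynomial ℤ)) * hXd

lemma conv_succ {M : Type*} [AddCommGroup M] (n : ℕ) (f : ℕ → ℕ → M) :
    ∑ k ∈ Finset.range (n+2), (n+1).choose k • f k (n+1-k) =
      ∑ k ∈ Finset.range (n+1), n.choose k • f k (n+1-k) +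
      ∑ k ∈ Finset.range (n+1), n.choose k • f (k+1) (n-k) := by
  rw [Finset.sum_range_succ' _ (n+1)]
  simp only [Nat.choose_succ_succ, add_smul, Finset.sum_add_distrib, Nat.choose_zero_right,
    one_smul, Nat.succ_sub_succ]
  rw [Finset.sum_range_succ (fun k => n.choose (k+1) • f (k+1) (n-k))]
  simp only [Nat.choose_succ_self, zero_smul, add_zero]
  rw [Finset.sum_range_succ' (fun k => n.choose k • f k (n+1-k)) n]
  simp only [Nat.choose_zero_right, one_smul, Nat.succ_sub_succ]
  abel

lemma SV_zero_n (y : ℤ) : SVspec 0 y = 1 := by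
  rw [SVspec]
  rw [Finset.sum_eq_single_of_mem 1 (Finset.mem_univ 1)
    (fun π _ hπ => absurd (Subsingleton.elim π 1) hπ)]
  simp [exc, cyc, Equiv.Perm.cycleType_one]

lemma SV_conv (u v : ℕ) (n : ℕ) : SVspec n ((u + v : ℕ) : ℤ) =
    ∑ k ∈ Finset.range (n+1), n.choose k • (SVspec k (u : ℤ) * SVspec (n-k) (v : ℤ)) := by
  induction n with
  | zero => simp [SV_zero_n]
  | succ n ih =>
    rw [SV_rec n (u+v), ih, conv_succ n (fun k l => SVspec k (u:ℤ) * SVspec l (v:ℤ))]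
    simp only [nsmul_eq_mul, Finset.mul_sum, Polynomial.derivative_sum, Polynomial.derivative_mul,
      Polynomial.derivative_natCast, zero_mul, zero_add, ← Finset.sum_add_distrib]
    refine Finset.sum_congr rfl fun k hk => ?_
    have hk' : k ≤ n := Nat.lt_succ_iff.1 (Finset.mem_range.1 hk)
    rw [show n+1-k = (n-k)+1 from by omega]
    rw [SV_rec (n-k) v, SV_rec k u]
    have hcast : ((n-k : ℕ) : Polynomial ℤ) = (n : Polynomial ℤ) - (k : Polynomial ℤ) := by
      push_cast [Nat.cast_sub hk']
      ring
    have hc2 : ((u+v : ℕ) : ℤ) = (u : ℤ) + (v : ℤ) := by push_cast; ring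
    rw [hc2, map_add, hcast]
    ring

noncomputable def Aq (n : ℕ) : Polynomial ℚ := (SVspec n 1).map (Int.castRingHom ℚ)

lemma Aq_rec (n : ℕ) :
    Aq (n+1) = Aq n + (n : Polynomial ℚ) * (Polynomial.X * Aq n)
      + Polynomial.X * (1 - Polynomial.X) * Polynomial.derivative (Aq n) := by
  unfold Aq
  have h := SV_rec n 1
  rw [Nat.cast_one] at h
  rw [h]
  simp only [Polynomial.map_add, Polynomial.map_mul, Polynomial.map_natCast, Polynomial.map_X,
    Polynomial.map_sub, Polynomial.map_one, Polynomial.map_C, Polynomial.derivative_map,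
    Nat.cast_one, map_one, Polynomial.C_1, one_mul]

lemma SV_one_n : SVspec 1 (1 : ℤ) = 1 := by
  rw [SVspec]
  rw [Finset.sum_eq_single_of_mem 1 (Finset.mem_univ 1)
    (fun π _ hπ => absurd (Subsingleton.elim π 1) hπ)]
  simp [exc, cyc, Equiv.Perm.cycleType_one]

lemma Aq_zero : Aq 0 = 1 := by simp [Aq, SV_zero_n]
lemma Aq_one : Aq 1 = 1 := by simp [Aq, SV_one_n]

noncomputable def Wq (n : ℕ) : Polynomial ℚ :=
  ∑ k ∈ Finset.range (n+1), n.choose k • (Aq k * (Polynomial.X - 1) ^ (n-k))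

lemma XoneD (m : ℕ) :
    ((Polynomial.X : Polynomial ℚ) - 1) * Polynomial.derivative ((Polynomial.X - 1) ^ m) =
      (m : Polynomial ℚ) * (Polynomial.X - 1) ^ m := by
  cases m with
  | zero => simp
  | succ k =>
    rw [Polynomial.derivative_pow, Polynomial.derivative_sub, Polynomial.derivative_X,
      Polynomial.derivative_one]
    simp only [Nat.add_sub_cancel, Polynomial.C_eq_natCast]
    push_cast
    ring

lemma Wq_rec (n : ℕ) :
    Wq (n+1) = ((n : Polynomial ℚ) + 1) * (Polynomial.X * Wq n)
      + Polynomial.X * (1 - Polynomial.X) * Polynomial.derivative (Wq n) := by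
  unfold Wq
  rw [conv_succ n (fun k l => Aq k * (Polynomial.X - 1) ^ l)]
  simp only [nsmul_eq_mul, Finset.mul_sum, Polynomial.derivative_sum, Polynomial.derivative_mul,
    Polynomial.derivative_natCast, zero_mul, zero_add, ← Finset.sum_add_distrib]
  refine Finset.sum_congr rfl fun k hk => ?_
  have hk' : k ≤ n := Nat.lt_succ_iff.1 (Finset.mem_range.1 hk)
  have hcast : ((n-k : ℕ) : Polynomial ℚ) = (n : Polynomial ℚ) - (k : Polynomial ℚ) := by
    push_cast [Nat.cast_sub hk']
    ring
  rw [show n+1-k = (n-k)+1 from by omega, pow_succ, Aq_rec k]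
  have h1 : ((Polynomial.X : Polynomial ℚ) - 1) *
      Polynomial.derivative ((Polynomial.X - 1) ^ (n-k)) =
      ((n : Polynomial ℚ) - (k : Polynomial ℚ)) * (Polynomial.X - 1) ^ (n-k) := by
    rw [XoneD, hcast]
  linear_combination ((n.choose k : Polynomial ℚ) * Polynomial.X * Aq k) * h1

lemma Wq_eq (n : ℕ) : Wq (n+1) = Polynomial.X * Aq (n+1) := by
  induction n with
  | zero =>
    rw [Wq]
    norm_num [Finset.sum_range_succ, Aq_zero, Aq_one]
  | succ n ih =>
    have hd : Polynomial.derivative (Polynomial.X * Aq (n+1)) =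
        Aq (n+1) + Polynomial.X * Polynomial.derivative (Aq (n+1)) := by
      rw [Polynomial.derivative_mul, Polynomial.derivative_X]
      ring
    rw [Wq_rec, ih, hd, Aq_rec (n+1)]
    push_cast
    ring

lemma key_coeff {n k : ℕ} (hk : k ≤ n) (p q : Polynomial ℚ) :
    Polynomial.C ((n.factorial : ℚ)⁻¹) * ((n.choose k) • (p * q)) =
      (Polynomial.C ((k.factorial : ℚ)⁻¹) * p) *
        (Polynomial.C (((n-k).factorial : ℚ)⁻¹) * q) := by
  have h : (n.choose k : ℚ) * k.factorial * (n-k).factorial = n.factorial := by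
    exact_mod_cast congrArg (Nat.cast : ℕ → ℚ) (Nat.choose_mul_factorial_mul_factorial hk)
  have hC : ((n.factorial : ℚ)⁻¹) * (n.choose k : ℚ) =
      ((k.factorial : ℚ)⁻¹) * (((n-k).factorial : ℚ)⁻¹) := by
    field_simp
    linarith [h]
  rw [nsmul_eq_mul]
  calc Polynomial.C ((n.factorial : ℚ)⁻¹) * ((n.choose k : Polynomial ℚ) * (p * q))
      = (Polynomial.C ((n.factorial : ℚ)⁻¹) * (n.choose k : Polynomial ℚ)) * (p * q) := by ring
    _ = (Polynomial.C ((k.factorial : ℚ)⁻¹) * Polynomial.C (((n-k).factorial : ℚ)⁻¹)) * (p*q) := by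
        rw [← Polynomial.C_eq_natCast, ← Polynomial.C_mul, ← Polynomial.C_mul, hC]
    _ = _ := by ring

noncomputable def FF (m : ℕ) : PowerSeries (Polynomial ℚ) :=
  PowerSeries.mk fun n =>
    Polynomial.C ((n.factorial : ℚ)⁻¹) * (SVspec n (m : ℤ)).map (Int.castRingHom ℚ)

noncomputable def EE : PowerSeries (Polynomial ℚ) :=
  PowerSeries.mk fun n => Polynomial.C ((n.factorial : ℚ)⁻¹) * (Polynomial.X - 1) ^ n

lemma Aq_conv (u v n : ℕ) : (SVspec n ((u+v : ℕ) : ℤ)).map (Int.castRingHom ℚ) =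
    ∑ k ∈ Finset.range (n+1), n.choose k •
      ((SVspec k (u : ℤ)).map (Int.castRingHom ℚ) *
        (SVspec (n-k) (v : ℤ)).map (Int.castRingHom ℚ)) := by
  rw [SV_conv]
  simp only [← Polynomial.coe_mapRingHom, map_sum, map_nsmul, map_mul]

lemma FF_mul (u v : ℕ) : FF (u + v) = FF u * FF v := by
  apply PowerSeries.ext
  intro n
  rw [PowerSeries.coeff_mul]
  rw [Finset.Nat.sum_antidiagonal_eq_sum_range_succ_mk]
  simp only [FF, PowerSeries.coeff_mk]
  rw [Aq_conv u v n, Finset.mul_sum]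
  refine Finset.sum_congr rfl fun k hk => ?_
  exact key_coeff (Nat.lt_succ_iff.1 (Finset.mem_range.1 hk)) _ _

lemma FF_pow (m : ℕ) : FF (m + 1) = FF 1 ^ (m + 1) := by
  induction m with
  | zero => rw [pow_one]
  | succ k ih => rw [show k+1+1 = (k+1)+1 from rfl, FF_mul (k+1) 1, ih, ← pow_succ]

lemma FF_one_eul :
    FF 1 * (EE - PowerSeries.C (R := Polynomial ℚ) Polynomial.X) =
      1 - PowerSeries.C (R := Polynomial ℚ) Polynomial.X := by
  apply PowerSeries.ext
  intro n
  rw [mul_sub, map_sub, map_sub, PowerSeries.coeff_mul_C]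
  have hfe : (PowerSeries.coeff (R := Polynomial ℚ) n) (FF 1 * EE) =
      Polynomial.C ((n.factorial : ℚ)⁻¹) * Wq n := by
    rw [PowerSeries.coeff_mul, Finset.Nat.sum_antidiagonal_eq_sum_range_succ_mk]
    simp only [FF, EE, PowerSeries.coeff_mk]
    rw [Wq, Finset.mul_sum]
    refine Finset.sum_congr rfl fun k hk => ?_
    exact (key_coeff (Nat.lt_succ_iff.1 (Finset.mem_range.1 hk)) _ _).symm
  rw [hfe]
  cases n with
  | zero =>
    simp [Wq, FF, Aq_zero, Nat.cast_one, SV_zero_n, PowerSeries.coeff_mk, PowerSeries.coeff_one,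
      PowerSeries.coeff_C, Aq]
  | succ m =>
    rw [Wq_eq m]
    simp only [FF, PowerSeries.coeff_mk, PowerSeries.coeff_one, PowerSeries.coeff_C,
      Nat.succ_ne_zero, if_false]
    have : (SVspec (m+1) ((1:ℕ) : ℤ)).map (Int.castRingHom ℚ) = Aq (m+1) := by
      rw [Nat.cast_one]; rfl
    rw [this]
    ring

theorem stmt0 (y : ℤ) (hy : 1 ≤ y) :
    (PowerSeries.mk fun n =>
        Polynomial.C ((n.factorial : ℚ)⁻¹) * (SVspec n y).map (Int.castRingHom ℚ)) *
      ((PowerSeries.mk fun n =>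
          Polynomial.C ((n.factorial : ℚ)⁻¹) * (Polynomial.X - 1) ^ n) -
        PowerSeries.C (R := Polynomial ℚ) Polynomial.X) ^ y.toNat =
    (1 - PowerSeries.C (R := Polynomial ℚ) Polynomial.X) ^ y.toNat := by
  obtain ⟨m, rfl⟩ : ∃ m : ℕ, y = ((m + 1 : ℕ) : ℤ) := ⟨(y - 1).toNat, by omega⟩
  rw [Int.toNat_natCast]
  show FF (m+1) * (EE - PowerSeries.C (R := Polynomial ℚ) Polynomial.X) ^ (m+1) =
    (1 - PowerSeries.C (R := Polynomial ℚ) Polynomial.X) ^ (m+1)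
  rw [FF_pow, ← mul_pow, FF_one_eul]
end

section
/- Let Q_n ∈ ℤ[x,y][z] be the monic polynomials defined by Q_0 = 1, Q_1 = z − y, and Q_n = (z − (y + (n−1)(1+x)))·Q_{n−1} − (n−1)·(xy + (n−2)x)·Q_{n−2} for n ≥ 2. Let L be the moment functional of the sequence (F_n(x,y)). Then L(Q_m · Q_n) = 0 whenever m ≠ n, and L(Q_n²) = n! · x^n · ∏_{j=0}^{n−1}(y+j) for every n ≥ 0. In particular the Savage–Viswanathan polynomials F_n(x,y) are the moments of the orthogonal polynomial family (Q_n). -/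
/-- The Savage–Viswanathan polynomial `F_n(x,y) ∈ ℤ[x,y]`, with `x = X 0`, `y = X 1`. -/
noncomputable def SV (n : ℕ) : MvPolynomial (Fin 2) ℤ :=
  ∑ π : Equiv.Perm (Fin n), MvPolynomial.X 0 ^ exc π * MvPolynomial.X 1 ^ cyc π

/-- The moment functional associated to the sequence of Savage–Viswanathan
polynomials: `L(p) = Σ_i (coeff of z^i in p) · F_i(x,y)`. -/
noncomputable def Lsv (p : Polynomial (MvPolynomial (Fin 2) ℤ)) : MvPolynomial (Fin 2) ℤ :=
  p.sum fun i a => a * SV i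

open Equiv Equiv.Perm Finset MvPolynomial

abbrev P2 := MvPolynomial (Fin 2) ℤ

noncomputable def xx : P2 := X 0
noncomputable def yy : P2 := X 1

/-- `b_k = y + k(1+x)` -/
noncomputable def bb (k : ℕ) : P2 := yy + (k : P2) * (1 + xx)
/-- `λ_{k+1} = (k+1) x (y + k)` -/
noncomputable def lamS (k : ℕ) : P2 := ((k : P2) + 1) * xx * (yy + (k : P2))

noncomputable def MM : ℕ → ℕ → P2
  | 0, 0 => 1
  | 0, _+1 => 0
  | n+1, 0 => bb 0 * MM n 0 + lamS 0 * MM n 1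
  | n+1, k+1 => MM n k + bb (k+1) * MM n (k+1) + lamS (k+1) * MM n (k+2)

theorem MM_zero (n k : ℕ) (h : n < k) : MM n k = 0 := by
  induction n generalizing k with
  | zero => cases k with
    | zero => omega
    | succ k => rfl
  | succ n ih =>
    cases k with
    | zero => omega
    | succ k =>
      rw [show MM (n+1) (k+1) = MM n k + bb (k+1) * MM n (k+1) + lamS (k+1) * MM n (k+2) from rfl,
        ih k (by omega), ih (k+1) (by omega), ih (k+2) (by omega)]
      ring

theorem MM_diag (n : ℕ) : MM n n = 1 := by
  induction n with
  | zero => rfl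
  | succ n ih =>
    rw [show MM (n+1) (n+1) = MM n n + bb (n+1) * MM n (n+1) + lamS (n+1) * MM n (n+2) from rfl,
      ih, MM_zero n (n+1) (by omega), MM_zero n (n+2) (by omega)]
    ring

theorem pderiv_xx : pderiv 0 xx = 1 := by simp [xx]
theorem pderiv_yy : pderiv 0 yy = 0 := by
  simp [yy, pderiv_X, Pi.single_apply]

theorem pderiv_natCast (k : ℕ) : pderiv (0 : Fin 2) ((k : P2)) = 0 := by
  induction k with
  | zero => simp
  | succ k ih => push_cast; simp [ih]

theorem MMderiv (n k : ℕ) :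
    (1 - xx) * pderiv 0 (MM n k) + ((n : P2) - (k : P2)) * MM n k =
      ((k : P2) + 1) * (yy + (k : P2)) * MM n (k+1) := by
  induction n generalizing k with
  | zero =>
    cases k with
    | zero =>
      rw [show MM 0 0 = 1 from rfl, show MM 0 1 = 0 from rfl]
      simp
    | succ k =>
      rw [show MM 0 (k+1) = 0 from rfl, show MM 0 (k+2) = 0 from rfl]
      simp
  | succ n ih =>
    cases k with
    | zero =>
      have h0 := ih 0
      have h1 := ih 1
      rw [show MM (n+1) 0 = bb 0 * MM n 0 + lamS 0 * MM n 1 from rfl,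
        show MM (n+1) 1 = MM n 0 + bb 1 * MM n 1 + lamS 1 * MM n 2 from rfl]
      simp only [map_add, pderiv_mul, map_mul, pderiv_one, pderiv_xx, pderiv_yy, pderiv_natCast, bb, lamS] at *
      push_cast at *
      linear_combination (yy) * h0 + (xx * (yy)) * h1
    | succ k =>
      have h0 := ih k
      have h1 := ih (k+1)
      have h2 := ih (k+2)
      rw [show MM (n+1) (k+1) = MM n k + bb (k+1) * MM n (k+1) + lamS (k+1) * MM n (k+2) from rfl,
        show MM (n+1) (k+2) = MM n (k+1) + bb (k+2) * MM n (k+2) + lamS (k+2) * MM n (k+3) from rfl]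
      simp only [map_add, pderiv_mul, map_mul, pderiv_one, pderiv_xx, pderiv_yy, pderiv_natCast, bb, lamS] at *
      push_cast at *
      linear_combination h0 + (yy + ((k:P2)+1) * (1 + xx)) * h1 +
        (((k:P2)+2) * xx * (yy + (k:P2)+1)) * h2

section CycleLemmas
variable {α : Type*} [DecidableEq α] [Fintype α]

theorem isCycle_swapExt {c : Perm α} (hc : c.IsCycle) {a b : α}
    (ha : c a = a) (hb : c b ≠ b) : (swap a b * c).IsCycle := by
  have hab : a ≠ b := fun h => hb (h ▸ ha)
  have hca : ∀ z, c z = a → z = a := fun z h => c.injective (h.trans ha.symm)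
  have hsb : ∀ z, c z ≠ z → c z ≠ a → c z ≠ b → (swap a b * c) z = c z := by
    intro z _ h1 h2
    simp [Perm.mul_apply, swap_apply_of_ne_of_ne h1 h2]
  have claim : ∀ k : ℕ, (swap a b * c).SameCycle b ((c ^ k) b) := by
    intro k
    induction k with
    | zero => exact SameCycle.refl _ _
    | succ k ih =>
      have hz : (c ^ k) b ∈ c.support := by
        rw [Equiv.Perm.pow_apply_mem_support]
        exact Perm.mem_support.mpr hb
      have hz' : c ((c ^ k) b) ≠ (c ^ k) b := Perm.mem_support.mp hz
      rw [pow_succ', Perm.mul_apply]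
      by_cases hcb : c ((c ^ k) b) = b
      · rw [hcb]
      · have hcz : c ((c ^ k) b) ≠ a := by
          intro h
          have hzb : (c ^ k) b = a := hca _ h
          exact absurd ha (hzb ▸ hz')
        have : (swap a b * c) ((c ^ k) b) = c ((c ^ k) b) := hsb _ hz' hcz hcb
        refine ih.trans ⟨1, ?_⟩
        simpa using this
  have hcbne : c b ≠ a := fun h => hb ((hca b h) ▸ ha)
  refine ⟨b, ?_, ?_⟩
  · have : (swap a b * c) b = c b := hsb b hb hcbne hb
    rw [this]; exact hb
  · intro y hy
    by_cases hya : y = a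
    · have h1 : (swap a b * c) a = b := by simp [Perm.mul_apply, ha]
      rw [hya]
      have h2 : (swap a b * c).SameCycle a b := ⟨1, by simpa using h1⟩
      exact h2.symm
    · have hcy : c y ≠ y := by
        intro h
        by_cases hyb : y = b
        · exact hb (hyb ▸ h)
        · exact hy (by simp [Perm.mul_apply, h, swap_apply_of_ne_of_ne hya hyb])
      obtain ⟨i, hi⟩ := hc.exists_pow_eq hb hcy
      rw [← hi]
      exact claim i

theorem cycleType_card_swap_mul {f : Perm α} {a b : α} (hab : a ≠ b)
    (ha : f a = a) (hb : f b ≠ b) :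
    Multiset.card (swap a b * f).cycleType = Multiset.card f.cycleType := by
  classical
  set c := f.cycleOf b with hc_def
  set g := f * c⁻¹ with hg_def
  have hmem : c ∈ f.cycleFactorsFinset :=
    cycleOf_mem_cycleFactorsFinset_iff.mpr (Perm.mem_support.mpr hb)
  have hdisj : Perm.Disjoint g c := disjoint_mul_inv_of_mem_cycleFactorsFinset hmem
  have hfgc : g * c = f := by rw [hg_def]; group
  have hsupc : c.support ⊆ f.support := f.support_cycleOf_le b
  have hca : c a = a := by
    by_contra h
    exact (Perm.mem_support.mp (hsupc (Perm.mem_support.mpr h))) ha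
  have hcb : c b ≠ b := by rw [hc_def, Perm.cycleOf_apply_self]; exact hb
  have hcycle : c.IsCycle := Perm.isCycle_cycleOf f hb
  have hinva : c⁻¹ a = a := by rw [Perm.inv_eq_iff_eq, hca]
  have hga : g a = a := by rw [hg_def, Perm.mul_apply, hinva, ha]
  have hgb : g b = b := by
    rcases (Perm.disjoint_iff_eq_or_eq.mp hdisj) b with h | h
    · exact h
    · exact absurd h hcb
  have hsc : (swap a b * c).IsCycle := isCycle_swapExt hcycle hca hcb
  have hd2 : Perm.Disjoint g (swap a b * c) := by
    rw [Perm.disjoint_iff_eq_or_eq]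
    intro x
    by_cases hgx : g x = x
    · exact Or.inl hgx
    · right
      have hcx : c x = x := ((Perm.disjoint_iff_eq_or_eq.mp hdisj) x).resolve_left hgx
      have hxa : x ≠ a := fun h => hgx (h ▸ hga)
      have hxb : x ≠ b := fun h => hgx (h ▸ hgb)
      simp [Perm.mul_apply, hcx, swap_apply_of_ne_of_ne hxa hxb]
  have hdswapg : Perm.Disjoint (swap a b) g := by
    rw [Perm.disjoint_iff_eq_or_eq]
    intro x
    by_cases hxa : x = a
    · exact Or.inr (hxa ▸ hga)
    · by_cases hxb : x = b
      · exact Or.inr (hxb ▸ hgb)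
      · exact Or.inl (swap_apply_of_ne_of_ne hxa hxb)
  have key : swap a b * f = g * (swap a b * c) := by
    rw [← hfgc, ← mul_assoc, hdswapg.commute.eq, mul_assoc]
  rw [key, Perm.Disjoint.cycleType_mul hd2, ← hfgc, Perm.Disjoint.cycleType_mul hdisj]
  simp [hsc.cycleType, hcycle.cycleType]

theorem cycleType_card_swap_mul_fixed {f : Perm α} {a b : α} (hab : a ≠ b)
    (ha : f a = a) (hb : f b = b) :
    Multiset.card (swap a b * f).cycleType = Multiset.card f.cycleType + 1 := by
  have hd : Perm.Disjoint (swap a b) f := by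
    rw [Perm.disjoint_iff_eq_or_eq]
    intro x
    by_cases hxa : x = a
    · exact Or.inr (hxa ▸ ha)
    · by_cases hxb : x = b
      · exact Or.inr (hxb ▸ hb)
      · exact Or.inl (swap_apply_of_ne_of_ne hxa hxb)
  rw [Perm.Disjoint.cycleType_mul hd]
  simp [(isCycle_swap hab).cycleType, card_support_swap hab, add_comm]

theorem filter_fix_swap_mul {f : Perm α} {a b : α} (hab : a ≠ b)
    (ha : f a = a) (hb : f b ≠ b) :
    (univ.filter fun x => (swap a b * f) x = x) =
      (univ.filter fun x => f x = x).erase a := by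
  ext x
  simp only [mem_filter, mem_univ, true_and, mem_erase]; simp only [Perm.mul_apply]
  constructor
  · intro h
    have hfxa : f x ≠ a := by
      intro hfa
      have hxa : x = a := f.injective (hfa.trans ha.symm)
      rw [hxa, ha, swap_apply_left] at h
      exact hab h.symm
    have hfxb : f x ≠ b := by
      intro hfb
      rw [hfb, swap_apply_right] at h
      exact hab ((ha.symm.trans (congrArg f h)).trans hfb)
    rw [swap_apply_of_ne_of_ne hfxa hfxb] at h
    refine ⟨fun hxa => hfxa (hxa ▸ h : f x = a), h⟩
  · rintro ⟨hxa, hfx⟩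
    have hxb : x ≠ b := fun h => hb (h ▸ hfx)
    rw [hfx, swap_apply_of_ne_of_ne hxa hxb]

theorem filter_fix_swap_mul_fixed {f : Perm α} {a b : α} (hab : a ≠ b)
    (ha : f a = a) (hb : f b = b) :
    (univ.filter fun x => (swap a b * f) x = x) =
      ((univ.filter fun x => f x = x).erase a).erase b := by
  ext x
  simp only [mem_filter, mem_univ, true_and, mem_erase]; simp only [Perm.mul_apply]
  constructor
  · intro h
    have hfxa : f x ≠ a := by
      intro hfa
      have hxa : x = a := f.injective (hfa.trans ha.symm)
      rw [hxa, ha, swap_apply_left] at h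
      exact hab h.symm
    have hfxb : f x ≠ b := by
      intro hfb
      have hxb : x = b := f.injective (hfb.trans hb.symm)
      rw [hxb, hb, swap_apply_right] at h
      exact hab h
    rw [swap_apply_of_ne_of_ne hfxa hfxb] at h
    exact ⟨fun hxb => hfxb (hxb ▸ h : f x = b), fun hxa => hfxa (hxa ▸ h : f x = a), h⟩
  · rintro ⟨hxb, hxa, hfx⟩
    rw [hfx, swap_apply_of_ne_of_ne hxa hxb]

/-- number of cycles including fixed points -/
def cycc (f : Perm α) : ℕ :=
  Multiset.card f.cycleType + (univ.filter fun x => f x = x).card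

theorem cycc_swap_mul {f : Perm α} {a b : α} (hab : a ≠ b) (ha : f a = a) :
    cycc (swap a b * f) + 1 = cycc f := by
  by_cases hb : f b = b
  · have h1 := cycleType_card_swap_mul_fixed hab ha hb
    have h2 := filter_fix_swap_mul_fixed hab ha hb
    have hamem : a ∈ univ.filter fun x => f x = x := by simp [ha]
    have hbmem : b ∈ (univ.filter fun x => f x = x).erase a := by
      simp [hb, hab.symm]
    unfold cycc
    rw [h1, h2, card_erase_of_mem hbmem, card_erase_of_mem hamem]
    have h3 : 1 ≤ (univ.filter fun x => f x = x).card := card_pos.mpr ⟨a, hamem⟩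
    have h4 : 1 ≤ ((univ.filter fun x => f x = x).erase a).card := card_pos.mpr ⟨b, hbmem⟩
    rw [card_erase_of_mem hamem] at h4
    omega
  · have h1 := cycleType_card_swap_mul hab ha hb
    have h2 := filter_fix_swap_mul hab ha hb
    have hamem : a ∈ univ.filter fun x => f x = x := by simp [ha]
    unfold cycc
    rw [h1, h2, card_erase_of_mem hamem]
    have h3 : 1 ≤ (univ.filter fun x => f x = x).card := card_pos.mpr ⟨a, hamem⟩
    omega

end CycleLemmas

section DF
variable {n : ℕ}

theorem df_swap (p : Fin (n+1)) (e : Perm (Fin n)) :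
    Equiv.Perm.decomposeFin.symm (p, e) = swap 0 p * Equiv.Perm.decomposeFin.symm (0, e) := by
  ext x
  refine Fin.cases ?_ ?_ x
  · simp
  · intro i
    simp [Equiv.Perm.decomposeFin_symm_apply_succ]

theorem df0_eq_extend (e : Perm (Fin n)) :
    Equiv.Perm.decomposeFin.symm (0, e) = e.extendDomain (finSuccAboveEquiv 0) := by
  apply Equiv.ext; intro x
  refine Fin.cases ?_ ?_ x
  · rw [Equiv.Perm.decomposeFin_symm_apply_zero,
      Perm.extendDomain_apply_not_subtype _ _ (by simp)]
  · intro i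
    have h3 := Perm.extendDomain_apply_subtype e (finSuccAboveEquiv (0 : Fin (n+1)))
      (show (i.succ : Fin (n+1)) ≠ 0 from Fin.succ_ne_zero i)
    rw [Equiv.Perm.decomposeFin_symm_apply_succ, h3]
    have h1 : (finSuccAboveEquiv (0 : Fin (n+1))).symm ⟨i.succ, Fin.succ_ne_zero i⟩ = i := by
      rw [Equiv.symm_apply_eq, finSuccAboveEquiv_apply]
      exact Subtype.ext (by simp [Fin.succAbove_zero])
    rw [h1, finSuccAboveEquiv_apply]
    simp [Fin.succAbove_zero]

theorem cyc_df0 (e : Perm (Fin n)) :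
    cyc (Equiv.Perm.decomposeFin.symm (0, e)) = cyc e + 1 := by
  unfold cyc
  have hct : Multiset.card (Equiv.Perm.decomposeFin.symm (0, e)).cycleType =
      Multiset.card e.cycleType := by
    rw [df0_eq_extend, Perm.cycleType_extendDomain]
  have hfix : (univ.filter fun i => Equiv.Perm.decomposeFin.symm (0, e) i = i).card =
      (univ.filter fun i => e i = i).card + 1 := by
    rw [Finset.card_filter, Finset.card_filter, Fin.sum_univ_succ]
    simp only [Equiv.Perm.decomposeFin_symm_apply_zero, if_pos rfl,
      Equiv.Perm.decomposeFin_symm_apply_succ, swap_self, Equiv.refl_apply]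
    rw [add_comm]
    congr 1
    refine Finset.sum_congr rfl fun i _ => ?_
    congr 1
    simp [Fin.succ_inj]
  rw [hct, hfix]
  omega

theorem cyc_dfsucc (q : Fin n) (e : Perm (Fin n)) :
    cyc (Equiv.Perm.decomposeFin.symm (q.succ, e)) = cyc e := by
  have h0 : (Equiv.Perm.decomposeFin.symm (0, e)) 0 = 0 :=
    Equiv.Perm.decomposeFin_symm_apply_zero 0 e
  have := cycc_swap_mul (f := Equiv.Perm.decomposeFin.symm (0, e))
    (a := (0 : Fin (n+1))) (b := q.succ) (Fin.succ_ne_zero q).symm h0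
  rw [← df_swap] at this
  have h2 := cyc_df0 e
  unfold cycc at this
  unfold cyc at *
  omega

theorem exc_df0 (e : Perm (Fin n)) :
    exc (Equiv.Perm.decomposeFin.symm (0, e)) = exc e := by
  unfold exc
  rw [Finset.card_filter, Finset.card_filter, Fin.sum_univ_succ]
  simp only [Equiv.Perm.decomposeFin_symm_apply_zero,
    Equiv.Perm.decomposeFin_symm_apply_succ, swap_self, Equiv.refl_apply,
    Fin.succ_lt_succ_iff, lt_self_iff_false, if_false, zero_add]

theorem exc_dfsucc (z : Fin n) (e : Perm (Fin n)) :
    exc (Equiv.Perm.decomposeFin.symm ((e z).succ, e)) =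
      if z < e z then exc e else exc e + 1 := by
  unfold exc
  rw [Finset.card_filter, Finset.card_filter, Fin.sum_univ_succ]
  have h0 : Equiv.Perm.decomposeFin.symm ((e z).succ, e) 0 = (e z).succ :=
    Equiv.Perm.decomposeFin_symm_apply_zero _ e
  rw [h0, if_pos (Fin.succ_pos _)]
  have hterm : ∀ i : Fin n,
      (if i.succ < Equiv.Perm.decomposeFin.symm ((e z).succ, e) i.succ then 1 else 0) =
      (if i = z then 0 else if i < e i then 1 else 0) := by
    intro i
    rw [Equiv.Perm.decomposeFin_symm_apply_succ]
    by_cases hiz : i = z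
    · subst hiz
      rw [swap_apply_right, if_pos rfl]
      simp [Fin.not_lt_zero]
    · have hne : (e i).succ ≠ (e z).succ :=
        fun h => hiz (e.injective (Fin.succ_injective _ h))
      rw [swap_apply_of_ne_of_ne (Fin.succ_ne_zero _) hne, if_neg hiz]
      congr 1
      simp [Fin.succ_lt_succ_iff]
  rw [Finset.sum_congr rfl fun i _ => hterm i]
  rw [← Finset.sum_erase_add _ _ (mem_univ z), if_pos rfl, add_zero]
  have hrest : ∑ i ∈ univ.erase z, (if i = z then 0 else if i < e i then (1:ℕ) else 0) =
      ∑ i ∈ univ.erase z, (if i < e i then 1 else 0) :=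
    Finset.sum_congr rfl fun i hi => by rw [if_neg (Finset.mem_erase.mp hi).1]
  rw [hrest]
  have hfull : ∑ i : Fin n, (if i < e i then (1:ℕ) else 0) =
      (∑ i ∈ univ.erase z, (if i < e i then 1 else 0)) + (if z < e z then 1 else 0) :=
    (Finset.sum_erase_add _ _ (mem_univ z)).symm
  by_cases h : z < e z
  · rw [if_pos h]
    rw [hfull, if_pos h]
    omega
  · rw [if_neg h]
    rw [hfull, if_neg h]
    omega
end DF

theorem pderiv_y_pow (c : ℕ) : pderiv (0 : Fin 2) ((X 1 : P2) ^ c) = 0 := by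
  induction c with
  | zero => simp
  | succ c ih =>
    rw [pow_succ, pderiv_mul, ih]
    simp [pderiv_X, Pi.single_apply]

theorem pderiv_x_pow (a : ℕ) :
    pderiv (0 : Fin 2) ((X 0 : P2) ^ (a+1)) = (a+1 : ℕ) * (X 0 : P2) ^ a := by
  induction a with
  | zero => simp
  | succ a ih =>
    rw [pow_succ, pderiv_mul, ih]
    simp only [pderiv_X, Pi.single_eq_same, mul_one]
    push_cast
    ring

theorem per_e (a c m nn : ℕ) (hmn : a + m = nn) :
    (X 0 : P2) ^ a * X 1 ^ (c+1) + ((a • ((X 0:P2) ^ a) + m • ((X 0:P2) ^ (a+1))) * X 1 ^ c)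
    = X 1 * ((X 0:P2) ^ a * X 1 ^ c) +
      X 0 * (1 - X 0) * pderiv 0 ((X 0:P2) ^ a * X 1 ^ c) +
      (nn : P2) * X 0 * ((X 0:P2) ^ a * X 1 ^ c) := by
  subst hmn
  rw [pderiv_mul, pderiv_y_pow, mul_zero, add_zero]
  cases a with
  | zero =>
    have h1 : pderiv (0 : Fin 2) ((X 0 : P2) ^ 0) = 0 := by simp
    rw [h1]
    simp only [pow_zero, zero_smul, zero_add, one_mul, nsmul_eq_mul]
    push_cast
    ring
  | succ a =>
    rw [pderiv_x_pow]
    simp only [nsmul_eq_mul]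
    push_cast
    ring

theorem SV_rec_s1 (n : ℕ) :
    SV (n+1) = X 1 * SV n + X 0 * (1 - X 0) * pderiv 0 (SV n) +
      (n : P2) * X 0 * SV n := by
  have hsum : SV (n+1) = ∑ pe : Fin (n+1) × Perm (Fin n),
      (X 0 : P2) ^ exc (Equiv.Perm.decomposeFin.symm pe) *
        X 1 ^ cyc (Equiv.Perm.decomposeFin.symm pe) :=
    (Equiv.sum_comp Equiv.Perm.decomposeFin.symm _).symm
  rw [hsum, Fintype.sum_prod_type, Fin.sum_univ_succ]
  have h1 : ∑ e : Perm (Fin n),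
      (X 0 : P2) ^ exc (Equiv.Perm.decomposeFin.symm (0, e)) *
        X 1 ^ cyc (Equiv.Perm.decomposeFin.symm (0, e)) =
      ∑ e : Perm (Fin n), (X 0 : P2) ^ exc e * X 1 ^ (cyc e + 1) := by
    refine Finset.sum_congr rfl fun e _ => by rw [exc_df0, cyc_df0]
  rw [h1, Finset.sum_comm]
  have h2 : ∀ e : Perm (Fin n), ∑ q : Fin n,
      (X 0 : P2) ^ exc (Equiv.Perm.decomposeFin.symm (q.succ, e)) *
        X 1 ^ cyc (Equiv.Perm.decomposeFin.symm (q.succ, e)) =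
      ((exc e) • ((X 0:P2) ^ exc e) + ((n - exc e)) • ((X 0:P2) ^ (exc e + 1))) *
        X 1 ^ cyc e := by
    intro e
    have := Equiv.sum_comp e (fun q => (X 0 : P2) ^ exc (Equiv.Perm.decomposeFin.symm (q.succ, e)) *
        X 1 ^ cyc (Equiv.Perm.decomposeFin.symm (q.succ, e)))
    rw [← this]
    have hterm : ∀ z : Fin n,
        (X 0 : P2) ^ exc (Equiv.Perm.decomposeFin.symm ((e z).succ, e)) *
          X 1 ^ cyc (Equiv.Perm.decomposeFin.symm ((e z).succ, e)) =
        (if z < e z then (X 0:P2) ^ exc e else (X 0:P2) ^ (exc e + 1)) * X 1 ^ cyc e := by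
      intro z
      rw [exc_dfsucc, cyc_dfsucc]
      by_cases h : z < e z
      · rw [if_pos h, if_pos h]
      · rw [if_neg h, if_neg h]
    rw [Finset.sum_congr rfl fun z _ => hterm z, ← Finset.sum_mul]
    rw [Finset.sum_ite, Finset.sum_const, Finset.sum_const]
    have hcard : ((univ : Finset (Fin n)) \ (univ.filter fun z => z < e z)).card = n - exc e := by
      rw [Finset.card_sdiff_of_subset (Finset.filter_subset _ _)]
      simp [exc]
    rw [Finset.filter_not, hcard, show (univ.filter fun z => z < e z).card = exc e from rfl]
  rw [Finset.sum_congr rfl fun e _ => h2 e]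
  unfold SV
  rw [Finset.mul_sum, map_sum, Finset.mul_sum, Finset.mul_sum]
  rw [← Finset.sum_add_distrib, ← Finset.sum_add_distrib, ← Finset.sum_add_distrib]
  refine Finset.sum_congr rfl fun e _ => ?_
  have hle : exc e ≤ n := by
    have : exc e ≤ (univ : Finset (Fin n)).card := Finset.card_filter_le _ _
    simpa using this
  exact per_e (exc e) (cyc e) (n - exc e) n (by omega)

theorem SV_zero : SV 0 = 1 := by
  rw [SV]
  rw [Finset.sum_eq_single_of_mem 1 (Finset.mem_univ 1)
    (fun b _ hb => absurd (Subsingleton.elim b 1) hb)]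
  simp [exc, cyc]

theorem SV_eq_MM (n : ℕ) : SV n = MM n 0 := by
  induction n with
  | zero => rw [SV_zero]; rfl
  | succ n ih =>
    rw [SV_rec_s1, ih, show MM (n+1) 0 = bb 0 * MM n 0 + lamS 0 * MM n 1 from rfl]
    have h := MMderiv n 0
    simp only [bb, lamS, xx, yy, Nat.cast_zero] at h ⊢
    linear_combination (X 0 : P2) * h

/-! Lsv linearity -/

theorem Lsv_add (p q : Polynomial P2) : Lsv (p + q) = Lsv p + Lsv q :=
  Polynomial.sum_add_index p q _ (by simp) (by intros; ring)

theorem Lsv_monomial (k : ℕ) (a : P2) : Lsv (Polynomial.monomial k a) = a * SV k :=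
  Polynomial.sum_monomial_index a _ (by simp)

theorem Lsv_Cmul (a : P2) (p : Polynomial P2) : Lsv (Polynomial.C a * p) = a * Lsv p := by
  induction p using Polynomial.induction_on' with
  | add p q hp hq => rw [mul_add, Lsv_add, Lsv_add, hp, hq, mul_add]
  | monomial n b =>
    rw [Polynomial.C_mul_monomial, Lsv_monomial, Lsv_monomial, mul_assoc]

theorem Lsv_Xpow (k : ℕ) : Lsv (Polynomial.X ^ k) = SV k := by
  rw [Polynomial.X_pow_eq_monomial, Lsv_monomial, one_mul]

theorem Lsv_sub (p q : Polynomial P2) : Lsv (p - q) = Lsv p - Lsv q := by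
  have hneg : Lsv (-q) = - Lsv q := by
    have h : Polynomial.C (-1 : P2) * q = -q := by rw [map_neg, map_one]; ring
    rw [← h, Lsv_Cmul]; ring
  rw [sub_eq_add_neg, Lsv_add, hneg, sub_eq_add_neg]

theorem Lsv_zero : Lsv 0 = 0 := by unfold Lsv; exact Polynomial.sum_zero_index _

theorem Lsv_finsum {ι : Type*} (s : Finset ι) (f : ι → Polynomial P2) :
    Lsv (∑ i ∈ s, f i) = ∑ i ∈ s, Lsv (f i) := by
  classical
  induction s using Finset.induction_on with
  | empty => simpa using Lsv_zero
  | insert _ _ hx ih =>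
    rw [Finset.sum_insert hx, Finset.sum_insert hx, Lsv_add, ih]

noncomputable def Lam (k : ℕ) : P2 := ∏ j ∈ Finset.range k, lamS j

theorem Lam_eq (n : ℕ) : Lam n = (n.factorial : P2) * MvPolynomial.X 0 ^ n *
    ∏ j ∈ Finset.range n, (MvPolynomial.X 1 + (j : P2)) := by
  induction n with
  | zero => simp [Lam]
  | succ n ih =>
    rw [Lam, Finset.prod_range_succ, ← Lam, ih, Finset.prod_range_succ]
    simp only [lamS, xx, yy]
    push_cast [Nat.factorial_succ]
    ring


section Main
variable (Q : ℕ → Polynomial (MvPolynomial (Fin 2) ℤ))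
variable (hQ0 : Q 0 = 1)
variable (hQ1 : Q 1 = Polynomial.X - Polynomial.C (MvPolynomial.X 1))
variable (hQrec : ∀ n, 2 ≤ n → Q n =
      (Polynomial.X - Polynomial.C (MvPolynomial.X 1 +
          (((n - 1 : ℕ) : MvPolynomial (Fin 2) ℤ)) * (1 + MvPolynomial.X 0))) * Q (n - 1) -
      Polynomial.C ((((n - 1 : ℕ) : MvPolynomial (Fin 2) ℤ)) *
          (MvPolynomial.X 0 * MvPolynomial.X 1 +
            (((n - 2 : ℕ) : MvPolynomial (Fin 2) ℤ)) * MvPolynomial.X 0)) * Q (n - 2))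

include hQ0 hQ1 hQrec

theorem LXQ : ∀ k m : ℕ, Lsv (Polynomial.X ^ m * Q k) = Lam k * MM m k := by
  intro k
  induction k using Nat.strong_induction_on with
  | _ k ih =>
    match k with
    | 0 =>
      intro m
      rw [hQ0, mul_one, Lsv_Xpow, SV_eq_MM]
      simp [Lam]
    | 1 =>
      intro m
      have hx : Polynomial.X ^ m * Q 1 =
          Polynomial.X ^ (m+1) - Polynomial.C yy * Polynomial.X ^ m := by
        rw [hQ1]; unfold yy; ring
      rw [hx, Lsv_sub, Lsv_Xpow, Lsv_Cmul, Lsv_Xpow, SV_eq_MM, SV_eq_MM,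
        show MM (m+1) 0 = bb 0 * MM m 0 + lamS 0 * MM m 1 from rfl]
      simp only [Lam, Finset.prod_range_one, bb, lamS, xx, yy, Nat.cast_zero]
      ring
    | (j+2) =>
      intro m
      have hrec := hQrec (j+2) (by omega)
      have hr1 : j + 2 - 1 = j + 1 := rfl
      have hr2 : j + 2 - 2 = j := rfl
      rw [hr1, hr2] at hrec
      set B : P2 := MvPolynomial.X 1 + (((j+1 : ℕ) : P2)) * (1 + MvPolynomial.X 0) with hB
      set L : P2 := (((j+1 : ℕ) : P2)) *
          (MvPolynomial.X 0 * MvPolynomial.X 1 + ((j : ℕ) : P2) * MvPolynomial.X 0) with hL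
      have hx : Polynomial.X ^ m * Q (j+2) =
          Polynomial.X ^ (m+1) * Q (j+1) - Polynomial.C B * (Polynomial.X ^ m * Q (j+1))
            - Polynomial.C L * (Polynomial.X ^ m * Q j) := by
        rw [hrec]; ring
      rw [hx, Lsv_sub, Lsv_sub, Lsv_Cmul, Lsv_Cmul,
        ih (j+1) (by omega) (m+1), ih (j+1) (by omega) m, ih j (by omega) m,
        show MM (m+1) (j+1) = MM m j + bb (j+1) * MM m (j+1) + lamS (j+1) * MM m (j+2) from rfl]
      rw [show Lam (j+2) = Lam (j+1) * lamS (j+1) from Finset.prod_range_succ _ _,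
        show Lam (j+1) = Lam j * lamS j from Finset.prod_range_succ _ _]
      simp only [hB, hL, bb, lamS, xx, yy]
      push_cast
      ring

theorem QnatDegree : ∀ k, (Q k).natDegree ≤ k := by
  intro k
  induction k using Nat.strong_induction_on with
  | _ k ih =>
    match k with
    | 0 => rw [hQ0]; simp
    | 1 => rw [hQ1]; rw [Polynomial.natDegree_X_sub_C]
    | (j+2) =>
      have hrec := hQrec (j+2) (by omega)
      have hr1 : j + 2 - 1 = j + 1 := rfl
      have hr2 : j + 2 - 2 = j := rfl
      rw [hr1, hr2] at hrec
      rw [hrec]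
      refine le_trans (Polynomial.natDegree_sub_le _ _) ?_
      have h1 : ((Polynomial.X - Polynomial.C (MvPolynomial.X 1 +
          (((j+1 : ℕ) : P2)) * (1 + MvPolynomial.X 0))) * Q (j+1)).natDegree ≤ j+2 := by
        refine le_trans (Polynomial.natDegree_mul_le) ?_
        rw [Polynomial.natDegree_X_sub_C]
        have := ih (j+1) (by omega)
        omega
      have h2 : ((Polynomial.C ((((j+1 : ℕ) : P2)) *
          (MvPolynomial.X 0 * MvPolynomial.X 1 +
            ((j : ℕ) : P2) * MvPolynomial.X 0))) * Q j).natDegree ≤ j+2 := by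
        refine le_trans (Polynomial.natDegree_mul_le) ?_
        rw [Polynomial.natDegree_C]
        have := ih j (by omega)
        omega
      omega

theorem Qmonic : ∀ k, (Q k).Monic ∧ (Q k).natDegree = k := by
  intro k
  induction k using Nat.strong_induction_on with
  | _ k ih =>
    match k with
    | 0 => rw [hQ0]; exact ⟨Polynomial.monic_one, Polynomial.natDegree_one⟩
    | 1 => rw [hQ1]; exact ⟨Polynomial.monic_X_sub_C _, Polynomial.natDegree_X_sub_C _⟩
    | (j+2) =>
      have hrec := hQrec (j+2) (by omega)
      have hr1 : j + 2 - 1 = j + 1 := rfl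
      have hr2 : j + 2 - 2 = j := rfl
      rw [hr1, hr2] at hrec
      obtain ⟨hm1, hd1⟩ := ih (j+1) (by omega)
      obtain ⟨hmj, hdj⟩ := ih j (by omega)
      have hA : (Polynomial.X - Polynomial.C (MvPolynomial.X 1 +
          (((j+1 : ℕ) : P2)) * (1 + MvPolynomial.X 0))).Monic := Polynomial.monic_X_sub_C _
      have hP : ((Polynomial.X - Polynomial.C (MvPolynomial.X 1 +
          (((j+1 : ℕ) : P2)) * (1 + MvPolynomial.X 0))) * Q (j+1)).Monic := hA.mul hm1
      have hPdeg : ((Polynomial.X - Polynomial.C (MvPolynomial.X 1 +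
          (((j+1 : ℕ) : P2)) * (1 + MvPolynomial.X 0))) * Q (j+1)).natDegree = j+2 := by
        rw [hA.natDegree_mul hm1, Polynomial.natDegree_X_sub_C, hd1]
        omega
      have hRdeg : ((Polynomial.C ((((j+1 : ℕ) : P2)) *
          (MvPolynomial.X 0 * MvPolynomial.X 1 + ((j : ℕ) : P2) * MvPolynomial.X 0))) *
            Q j).natDegree ≤ j := by
        refine le_trans (Polynomial.natDegree_mul_le) ?_
        rw [Polynomial.natDegree_C, hdj]
        omega
      constructor
      · rw [hrec]
        have hlt : (Polynomial.C ((((j+1 : ℕ) : P2)) *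
            (MvPolynomial.X 0 * MvPolynomial.X 1 + ((j : ℕ) : P2) * MvPolynomial.X 0)) *
              Q j).degree < ((Polynomial.X - Polynomial.C (MvPolynomial.X 1 +
            (((j+1 : ℕ) : P2)) * (1 + MvPolynomial.X 0))) * Q (j+1)).degree := by
          rw [Polynomial.degree_eq_natDegree hP.ne_zero, hPdeg]
          calc (Polynomial.C ((((j+1 : ℕ) : P2)) *
            (MvPolynomial.X 0 * MvPolynomial.X 1 + ((j : ℕ) : P2) * MvPolynomial.X 0)) *
              Q j).degree ≤ ((j:ℕ) : WithBot ℕ) := by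
                refine le_trans (Polynomial.degree_le_natDegree) ?_
                exact_mod_cast hRdeg
            _ < ((j+2 : ℕ) : WithBot ℕ) := by exact_mod_cast (by omega : j < j + 2)
        rw [sub_eq_add_neg]
        exact hP.add_of_left (by rwa [Polynomial.degree_neg])
      · rw [hrec]
        have hlt2 : ((Polynomial.C ((((j+1 : ℕ) : P2)) *
            (MvPolynomial.X 0 * MvPolynomial.X 1 + ((j : ℕ) : P2) * MvPolynomial.X 0))) *
              Q j).natDegree < ((Polynomial.X - Polynomial.C (MvPolynomial.X 1 +
            (((j+1 : ℕ) : P2)) * (1 + MvPolynomial.X 0))) * Q (j+1)).natDegree := by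
          rw [hPdeg]; omega
        rw [Polynomial.natDegree_sub_eq_left_of_natDegree_lt hlt2, hPdeg]

theorem Lmul_lowdeg (n : ℕ) (p : Polynomial P2) (hdeg : p.degree < (n : WithBot ℕ)) :
    Lsv (p * Q n) = 0 := by
  have hp : p = ∑ i ∈ p.support, Polynomial.monomial i (p.coeff i) :=
    p.as_sum_support
  rw [show p * Q n = ∑ i ∈ p.support, Polynomial.monomial i (p.coeff i) * Q n by
    rw [← Finset.sum_mul, ← hp]]
  rw [Lsv_finsum]
  refine Finset.sum_eq_zero fun i hi => ?_
  have hiln : i < n := by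
    by_contra hc
    have : p.coeff i = 0 := Polynomial.coeff_eq_zero_of_degree_lt
      (lt_of_lt_of_le hdeg (by exact_mod_cast not_lt.mp hc))
    exact (Polynomial.mem_support_iff.mp hi) this
  rw [← Polynomial.C_mul_X_pow_eq_monomial, mul_assoc, Lsv_Cmul,
    LXQ Q hQ0 hQ1 hQrec n i, MM_zero i n hiln]
  ring

end Main

theorem stmt1 (Q : ℕ → Polynomial (MvPolynomial (Fin 2) ℤ))
    (hQ0 : Q 0 = 1)
    (hQ1 : Q 1 = Polynomial.X - Polynomial.C (MvPolynomial.X 1))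
    (hQrec : ∀ n, 2 ≤ n → Q n =
      (Polynomial.X - Polynomial.C (MvPolynomial.X 1 +
          (((n - 1 : ℕ) : MvPolynomial (Fin 2) ℤ)) * (1 + MvPolynomial.X 0))) * Q (n - 1) -
      Polynomial.C ((((n - 1 : ℕ) : MvPolynomial (Fin 2) ℤ)) *
          (MvPolynomial.X 0 * MvPolynomial.X 1 +
            (((n - 2 : ℕ) : MvPolynomial (Fin 2) ℤ)) * MvPolynomial.X 0)) * Q (n - 2)) :
    (∀ m n, m ≠ n → Lsv (Q m * Q n) = 0) ∧
    (∀ n, Lsv (Q n ^ 2) =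
      (n.factorial : MvPolynomial (Fin 2) ℤ) * MvPolynomial.X 0 ^ n *
        ∏ j ∈ Finset.range n, (MvPolynomial.X 1 + (j : MvPolynomial (Fin 2) ℤ))) := by
  have key : ∀ m n, m < n → Lsv (Q m * Q n) = 0 := by
    intro m n h
    apply Lmul_lowdeg Q hQ0 hQ1 hQrec n (Q m)
    calc (Q m).degree ≤ ((Q m).natDegree : WithBot ℕ) := Polynomial.degree_le_natDegree
      _ < (n : WithBot ℕ) := by
        exact_mod_cast lt_of_le_of_lt (QnatDegree Q hQ0 hQ1 hQrec m) h
  constructor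
  · intro m n hmn
    rcases lt_or_gt_of_ne hmn with h | h
    · exact key m n h
    · rw [mul_comm]; exact key n m h
  · intro n
    obtain ⟨hmon, hdeg⟩ := Qmonic Q hQ0 hQ1 hQrec n
    have hQne : Q n ≠ 0 := hmon.ne_zero
    have hdegQ : (Q n).degree = (n : WithBot ℕ) := by
      rw [Polynomial.degree_eq_natDegree hQne, hdeg]
    have hlead : (Q n).leadingCoeff = (Polynomial.X ^ n :
        Polynomial (MvPolynomial (Fin 2) ℤ)).leadingCoeff := by
      rw [hmon.leadingCoeff, (Polynomial.monic_X_pow n).leadingCoeff]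
    have hr : (Q n - Polynomial.X ^ n).degree < (n : WithBot ℕ) := by
      have := Polynomial.degree_sub_lt (by rw [hdegQ, Polynomial.degree_X_pow]) hQne hlead
      rwa [hdegQ] at this
    have hsplit : Q n ^ 2 = Polynomial.X ^ n * Q n + (Q n - Polynomial.X ^ n) * Q n := by ring
    rw [hsplit, Lsv_add, Lmul_lowdeg Q hQ0 hQ1 hQrec n _ hr, add_zero,
      LXQ Q hQ0 hQ1 hQrec n n, MM_diag, mul_one, Lam_eq]
end

section
/- Fix an integer k ≥ 1. Let R_n ∈ ℤ[x][z] be the monic polynomials defined by R_0 = 1, R_1 = z − (kx+1), and R_n = (z − (nkx + (n−1)k + 1))·R_{n−1} − (n−1)·kx·((n−1)k+1)·R_{n−2} for n ≥ 2. Let L be the moment functional of the once-shifted sequence (A_{n+1}^{(k)}(x))_{n≥0}. Then L(R_m · R_n) = 0 whenever m ≠ n, and L(R_n²) = n! · (kx)^n · ∏_{j=1}^{n}(jk+1) for every n ≥ 0. In particular the once-shifted 1/k-Eulerian polynomials A_{n+1}^{(k)}(x) are the moments of the orthogonal polynomial family (R_n). -/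
open Polynomial

/-- The `1/k`-Eulerian polynomial `A_n^{(k)}(x) = Σ_{π ∈ S_n} x^{exc π} k^{n - cyc π} ∈ ℤ[x]`. -/
noncomputable def Aek (k n : ℕ) : Polynomial ℤ :=
  ∑ π : Equiv.Perm (Fin n), Polynomial.C ((k : ℤ) ^ (n - cyc π)) * Polynomial.X ^ exc π

/-- The moment functional associated to the once-shifted sequence of `1/k`-Eulerian
polynomials: `L(p) = Σ_i (coeff of z^i in p) · A_{i+1}^{(k)}(x)`. -/
noncomputable def Lsh (k : ℕ) (p : Polynomial (Polynomial ℤ)) : Polynomial ℤ :=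
  p.sum fun i a => a * Aek k (i + 1)

noncomputable def Bq (k m : ℕ) : Polynomial ℤ :=
  ((m : Polynomial ℤ) + 1) * (k : Polynomial ℤ) * X + ((m : Polynomial ℤ) * (k : Polynomial ℤ) + 1)

noncomputable def Lq (k m : ℕ) : Polynomial ℤ :=
  (m : Polynomial ℤ) * ((k : Polynomial ℤ) * X) * ((m : Polynomial ℤ) * (k : Polynomial ℤ) + 1)

noncomputable def Pm (k : ℕ) : ℕ → ℕ → Polynomial ℤ
  | n, 0 => if n = 0 then 1 else 0
  | 0, j + 1 => Bq k 0 * Pm k 0 j + Lq k 1 * Pm k 1 j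
  | n + 1, j + 1 => Pm k n j + Bq k (n + 1) * Pm k (n + 1) j + Lq k (n + 2) * Pm k (n + 2) j
  termination_by n j => j

lemma Pm_zero (k n : ℕ) : Pm k n 0 = if n = 0 then 1 else 0 := by
  rw [Pm]

lemma Pm_succ_zero (k j : ℕ) :
    Pm k 0 (j + 1) = Bq k 0 * Pm k 0 j + Lq k 1 * Pm k 1 j := by
  rw [Pm]

lemma Pm_succ_succ (k n j : ℕ) :
    Pm k (n + 1) (j + 1) =
      Pm k n j + Bq k (n + 1) * Pm k (n + 1) j + Lq k (n + 2) * Pm k (n + 2) j := by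
  rw [Pm]

lemma der (k : ℕ) : ∀ j n : ℕ,
    ((n : Polynomial ℤ) + 1) * (((n : Polynomial ℤ) + 1) * (k : Polynomial ℤ) + 1) * Pm k (n + 1) j
      = ((j : Polynomial ℤ) - (n : Polynomial ℤ)) * Pm k n j
        + (1 - X) * derivative (Pm k n j) := by
  intro j
  induction j with
  | zero =>
    intro n
    rcases n with _ | n <;> simp [Pm_zero]
  | succ j IH =>
    intro n
    rcases n with _ | n
    · have I0 := IH 0
      have I1 := IH 1
      rw [Pm_succ_succ, Pm_succ_zero]
      simp only [Bq, Lq] at *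
      push_cast at I0 I1 ⊢
      simp only [derivative_add, derivative_mul, derivative_X, derivative_one,
        derivative_natCast, derivative_ofNat, derivative_zero]
      linear_combination (((0:Polynomial ℤ) + 1) * (k : Polynomial ℤ) * X + ((0 : Polynomial ℤ) * (k : Polynomial ℤ) + 1)) * I0
        + ((1 : Polynomial ℤ) * ((k : Polynomial ℤ) * X) * (1 * (k : Polynomial ℤ) + 1)) * I1
    · have I0 := IH n
      have I1 := IH (n + 1)
      have I2 := IH (n + 2)
      rw [Pm_succ_succ, Pm_succ_succ]
      simp only [Bq, Lq] at *
      push_cast at I0 I1 I2 ⊢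
      simp only [derivative_add, derivative_mul, derivative_X, derivative_one,
        derivative_natCast, derivative_ofNat, derivative_zero]
      linear_combination
        (((n : Polynomial ℤ) + 1 + 1) * (k : Polynomial ℤ) * X + (((n : Polynomial ℤ) + 1) * (k : Polynomial ℤ) + 1)) * I1
        + (((n : Polynomial ℤ) + 2) * ((k : Polynomial ℤ) * X) * (((n : Polynomial ℤ) + 2) * (k : Polynomial ℤ) + 1)) * I2
        + I0

lemma P0rec (k j : ℕ) :
    Pm k 0 (j + 1) = (1 + ((j : Polynomial ℤ) + 1) * (k : Polynomial ℤ) * X) * Pm k 0 j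
      + (k : Polynomial ℤ) * ((1 - X) * (X * derivative (Pm k 0 j))) := by
  have I0 := der k j 0
  rw [Pm_succ_zero]
  simp only [Bq, Lq] at *
  push_cast at I0 ⊢
  linear_combination ((k : Polynomial ℤ) * X) * I0

lemma Pm_eq_zero (k : ℕ) : ∀ j n, j < n → Pm k n j = 0 := by
  intro j
  induction j with
  | zero => intro n hn; rw [Pm_zero, if_neg (by omega)]
  | succ j IH =>
    intro n hn
    match n, hn with
    | n + 1, hn =>
      rw [Pm_succ_succ, IH n (by omega), IH (n + 1) (by omega), IH (n + 2) (by omega)]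
      ring

lemma Pm_diag (k : ℕ) : ∀ n, Pm k n n = 1 := by
  intro n
  induction n with
  | zero => rw [Pm_zero, if_pos rfl]
  | succ n IH =>
    rw [Pm_succ_succ, IH, Pm_eq_zero k n (n + 1) (by omega),
      Pm_eq_zero k n (n + 2) (by omega)]
    ring

lemma Lsh_zero (k : ℕ) : Lsh k 0 = 0 := Polynomial.sum_zero_index _

lemma Lsh_add (k : ℕ) (p q : Polynomial (Polynomial ℤ)) :
    Lsh k (p + q) = Lsh k p + Lsh k q :=
  Polynomial.sum_add_index p q _ (fun _ => zero_mul _) (fun _ _ _ => add_mul _ _ _)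

lemma Lsh_monomial (k j : ℕ) (a : Polynomial ℤ) :
    Lsh k (monomial j a) = a * Aek k (j + 1) :=
  Polynomial.sum_monomial_index a _ (zero_mul _)

lemma Lsh_C_mul (k : ℕ) (a : Polynomial ℤ) (p : Polynomial (Polynomial ℤ)) :
    Lsh k (C a * p) = a * Lsh k p := by
  induction p using Polynomial.induction_on' with
  | add p q hp hq => rw [mul_add, Lsh_add, Lsh_add, hp, hq, mul_add]
  | monomial j b => rw [C_mul_monomial, Lsh_monomial, Lsh_monomial, mul_assoc]

lemma Lsh_sub (k : ℕ) (p q : Polynomial (Polynomial ℤ)) :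
    Lsh k (p - q) = Lsh k p - Lsh k q := by
  have h : p - q = p + C (-1) * q := by
    simp only [map_neg, map_one]; ring
  rw [h, Lsh_add, Lsh_C_mul]; ring

lemma Lsh_X_pow (k j : ℕ) : Lsh k (X ^ j) = Aek k (j + 1) := by
  rw [← one_mul (X ^ j : Polynomial (Polynomial ℤ)), ← C_1, C_mul_X_pow_eq_monomial,
    Lsh_monomial, one_mul]

section Gen
open Equiv Equiv.Perm Finset
variable {α : Type*} [DecidableEq α] [Fintype α]

theorem swap_mul_cycle_isCycle {c : Perm α} (hc : c.IsCycle) {a b : α}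
    (hca : c a = a) (hb : c b ≠ b) :
    (swap a b * c).IsCycle ∧ (swap a b * c).support = insert a c.support := by
  have hab : a ≠ b := fun h => hb (by rw [← h, hca, h])
  have hanot : a ∉ c.support := notMem_support.mpr hca
  set s := swap a b * c with hs
  have hsa : s a = b := by simp [hs, Perm.mul_apply, hca]
  have hsupp : ∀ z, z ∈ c.support → c z ≠ a := by
    intro z hz
    have : c z ∈ c.support := apply_mem_support.mpr hz
    exact fun h => hanot (h ▸ this)
  have hSC : ∀ i : ℕ, s.SameCycle a ((c ^ i) b) := by
    intro i
    induction i with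
    | zero => exact ⟨1, by simpa using hsa⟩
    | succ i IH =>
      have hz : (c ^ i) b ∈ c.support :=
        pow_apply_mem_support.mpr (mem_support.mpr hb)
      have hstep : (c ^ (i + 1)) b = c ((c ^ i) b) := by
        rw [pow_succ']; rfl
      by_cases hcz : c ((c ^ i) b) = b
      · rw [hstep, hcz]; exact ⟨1, by simpa using hsa⟩
      · have hne_a : c ((c ^ i) b) ≠ a := hsupp _ hz
        have : s ((c ^ i) b) = c ((c ^ i) b) := by
          rw [hs, Perm.mul_apply, swap_apply_of_ne_of_ne hne_a hcz]
        refine IH.trans ⟨1, ?_⟩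
        rw [hstep, ← this]; simp
  have hcycle : s.IsCycle := by
    refine ⟨a, by rw [hsa]; exact fun h => hab h.symm, fun y hy => ?_⟩
    by_cases hya : y = a
    · subst hya; exact SameCycle.refl _ _
    · have hcy : c y ≠ y := by
        intro h
        by_cases hyb : y = b
        · exact hb (hyb ▸ h)
        · exact hy (by rw [hs, Perm.mul_apply, h, swap_apply_of_ne_of_ne hya hyb])
      obtain ⟨i, _, _, hi⟩ := (hc.sameCycle hb hcy).exists_pow_eq c
      exact hi ▸ hSC i
  refine ⟨hcycle, ?_⟩
  ext z
  simp only [mem_support, mem_insert]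
  by_cases hza : z = a
  · subst hza
    simp [hsa, Ne.symm hab]
  · by_cases hcz : c z = z
    · have hzb : z ≠ b := fun h => hb (h ▸ hcz)
      rw [hs, Perm.mul_apply, hcz, swap_apply_of_ne_of_ne hza hzb]
      simp [hza, hcz]
    · have hzsupp : z ∈ c.support := mem_support.mpr hcz
      have hne_a : c z ≠ a := hsupp z hzsupp
      constructor
      · intro _; exact Or.inr hcz
      · intro _
        by_cases hczb : c z = b
        · rw [hs, Perm.mul_apply, hczb, swap_apply_right]
          exact fun h => hza h.symm
        · rw [hs, Perm.mul_apply, swap_apply_of_ne_of_ne hne_a hczb]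
          exact hcz

theorem cyc_merge {f : Perm α} {a b : α} (hfa : f a = a) (hab : a ≠ b) :
    Multiset.card (swap a b * f).cycleType + (Fintype.card α - #(swap a b * f).support) + 1
      = Multiset.card f.cycleType + (Fintype.card α - #f.support) := by
  have hanot : a ∉ f.support := notMem_support.mpr hfa
  by_cases hfb : f b = b
  · -- b is a fixed point: swap a b disjoint from f
    have hbnot : b ∉ f.support := notMem_support.mpr hfb
    have hd : Perm.Disjoint (swap a b) f := by
      intro x
      by_cases hx : x = a ∨ x = b
      · rcases hx with h | h <;> subst h <;> right <;> assumption
      · push_neg at hx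
        left; exact swap_apply_of_ne_of_ne hx.1 hx.2
    have hct : (swap a b * f).cycleType = (swap a b).cycleType + f.cycleType :=
      hd.cycleType_mul
    have hsw : (swap a b).cycleType = {2} := by
      rw [(isCycle_swap hab).cycleType, card_support_swap hab]
    have hsupp : (swap a b * f).support = {a, b} ∪ f.support := by
      rw [hd.support_mul, support_swap hab]
    have hdsj : _root_.Disjoint ({a, b} : Finset α) f.support := by
      simp only [Finset.disjoint_left, Finset.mem_insert, Finset.mem_singleton, notMem_support]
      rintro x (rfl | rfl)
      exacts [hfa, hfb]
    have hcard : #(swap a b * f).support = #f.support + 2 := by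
      rw [hsupp, Finset.card_union_of_disjoint hdsj, Finset.card_insert_of_notMem (by simp [hab]),
        Finset.card_singleton]
      omega
    have hle : #(swap a b * f).support ≤ Fintype.card α := Finset.card_le_univ _ |>.trans (by simp)
    rw [hct, hsw, hcard]
    simp only [Multiset.card_add, Multiset.card_singleton]
    omega
  · -- b is moved by f: merge a into the cycle of b
    set c := f.cycleOf b with hc
    have hmem : c ∈ f.cycleFactorsFinset :=
      cycleOf_mem_cycleFactorsFinset_iff.mpr (mem_support.mpr hfb)
    have hcyc : c.IsCycle := isCycle_cycleOf f hfb
    have hcb : c b ≠ b := by rw [hc, cycleOf_apply_self]; exact hfb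
    have hcsupp : c.support ⊆ f.support := support_cycleOf_le f b
    have hca : c a = a := notMem_support.mp (fun h => hanot (hcsupp h))
    set g := f * c⁻¹ with hg
    have hdis : Perm.Disjoint g c := disjoint_mul_inv_of_mem_cycleFactorsFinset hmem
    have hfgc : f = g * c := by rw [hg]; simp [mul_assoc]
    obtain ⟨hscyc, hssupp⟩ := swap_mul_cycle_isCycle hcyc hca hcb
    have hga : g a = a := by
      have hia : c⁻¹ a = a := Equiv.Perm.inv_eq_iff_eq.mpr hca.symm
      rw [hg, Perm.mul_apply, hia, hfa]
    have hgb : g b = b := (hdis b).resolve_right hcb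
    have hgs : Perm.Disjoint g (swap a b * c) := by
      intro x
      by_cases hcx : c x = x
      · by_cases hxa : x = a
        · subst hxa; left; exact hga
        · right
          have hxb : x ≠ b := fun h => hcb (h ▸ hcx)
          rw [Perm.mul_apply, hcx, swap_apply_of_ne_of_ne hxa hxb]
      · left; exact (hdis x).resolve_right hcx
    have hcomm : swap a b * f = g * (swap a b * c) := by
      have hdg : Perm.Disjoint (swap a b) g := by
        intro x
        by_cases hx : x = a ∨ x = b
        · rcases hx with h | h <;> subst h <;> right <;> assumption
        · push_neg at hx
          left; exact swap_apply_of_ne_of_ne hx.1 hx.2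
      rw [hfgc, ← mul_assoc, hdg.commute.eq, mul_assoc]
    have hct : (swap a b * f).cycleType = g.cycleType + (swap a b * c).cycleType := by
      rw [hcomm, hgs.cycleType_mul]
    have hctg : g.cycleType = f.cycleType - c.cycleType :=
      cycleType_mul_inv_mem_cycleFactorsFinset_eq_sub hmem
    have hctc_le : c.cycleType ≤ f.cycleType := cycleType_le_of_mem_cycleFactorsFinset hmem
    have hcardc : Multiset.card c.cycleType = 1 := by
      rw [hcyc.cycleType]; rfl
    have hcards : Multiset.card (swap a b * c).cycleType = 1 := by
      rw [hscyc.cycleType]; rfl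
    have hcardg : Multiset.card g.cycleType = Multiset.card f.cycleType - 1 := by
      rw [hctg, Multiset.card_sub hctc_le, hcardc]
    have hctfpos : 1 ≤ Multiset.card f.cycleType := by
      have := Multiset.card_le_card hctc_le
      omega
    -- supports
    have hsuppf : f.support = g.support ∪ c.support := by
      rw [hfgc, hdis.support_mul]
    have hsupps : (swap a b * f).support = g.support ∪ (insert a c.support) := by
      rw [hcomm, hgs.support_mul, hssupp]
    have hganot : a ∉ g.support := notMem_support.mpr hga
    have hcard : #(swap a b * f).support = #f.support + 1 := by
      rw [hsupps, Finset.union_insert, Finset.card_insert_of_notMem (by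
        simp only [Finset.mem_union]
        exact fun h => h.elim (fun h' => hganot h') (fun h' => hanot (hcsupp h'))), ← hsuppf]
    have hle : #f.support < Fintype.card α := by
      have h1 : (swap a b * f).support ⊆ Finset.univ := Finset.subset_univ _
      have := Finset.card_le_card h1
      rw [hcard] at this
      simpa using this
    rw [hct, Multiset.card_add, hcardg, hcards, hcard]
    omega
end Gen

open Equiv Equiv.Perm Finset

-- the embedding of `Perm (Fin n)` into `Perm (Fin (n+1))` fixing `0`
def iota {n : ℕ} (e : Perm (Fin n)) : Perm (Fin (n + 1)) :=
  Equiv.Perm.decomposeFin.symm (0, e)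

lemma iota_zero {n : ℕ} (e : Perm (Fin n)) : iota e 0 = 0 :=
  Equiv.Perm.decomposeFin_symm_apply_zero 0 e

lemma iota_succ {n : ℕ} (e : Perm (Fin n)) (x : Fin n) : iota e x.succ = (e x).succ := by
  rw [iota, Equiv.Perm.decomposeFin_symm_apply_succ, swap_self]
  rfl

def embSucc (n : ℕ) : Fin n ≃ {x : Fin (n + 1) // x ≠ 0} where
  toFun x := ⟨x.succ, Fin.succ_ne_zero x⟩
  invFun y := y.1.pred y.2
  left_inv x := by simp
  right_inv y := by simp

lemma iota_eq_extendDomain {n : ℕ} (e : Perm (Fin n)) :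
    iota e = e.extendDomain (embSucc n) := by
  refine Equiv.ext fun z => ?_
  induction z using Fin.cases with
  | zero =>
    rw [iota_zero, Equiv.Perm.extendDomain_apply_not_subtype]
    simp
  | succ x =>
    have h2 := Equiv.Perm.extendDomain_apply_subtype e (embSucc n) (Fin.succ_ne_zero x)
    have h3 : (embSucc n).symm ⟨x.succ, Fin.succ_ne_zero x⟩ = x := by
      simp [embSucc]
    rw [iota_succ, h2, h3]
    rfl

lemma cycleType_iota {n : ℕ} (e : Perm (Fin n)) : (iota e).cycleType = e.cycleType := by
  rw [iota_eq_extendDomain]; exact Equiv.Perm.cycleType_extendDomain _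

lemma card_support_iota {n : ℕ} (e : Perm (Fin n)) :
    #(iota e).support = #e.support := by
  rw [iota_eq_extendDomain]; exact Equiv.Perm.card_support_extend_domain _

lemma cyc_eq_sub {n : ℕ} (π : Perm (Fin n)) :
    cyc π = Multiset.card π.cycleType + (n - #π.support) := by
  have h : (Finset.univ.filter fun i => π i = i).card + #π.support = n := by
    have h2 : π.support = Finset.univ.filter fun i => ¬ π i = i := rfl
    rw [h2, Finset.card_filter_add_card_filter_not]
    simp
  have h3 : #π.support ≤ n := by omega
  rw [cyc]
  omega

lemma card_cycleType_le_support {n : ℕ} (π : Perm (Fin n)) :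
    Multiset.card π.cycleType ≤ #π.support := by
  have h1 : ∀ x ∈ π.cycleType, 1 ≤ x := fun x hx =>
    le_of_lt (Equiv.Perm.one_lt_of_mem_cycleType hx)
  calc Multiset.card π.cycleType = Multiset.card π.cycleType • 1 := by simp
  _ ≤ π.cycleType.sum := Multiset.card_nsmul_le_sum h1
  _ = #π.support := Equiv.Perm.sum_cycleType π

lemma support_le_n {n : ℕ} (π : Perm (Fin n)) : #π.support ≤ n := by
  have := Finset.card_le_univ π.support
  simpa using this

lemma cyc_le {n : ℕ} (π : Perm (Fin n)) : cyc π ≤ n := by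
  have h1 := card_cycleType_le_support π
  have h2 := support_le_n π
  rw [cyc_eq_sub]
  omega

lemma exc_le {n : ℕ} (π : Perm (Fin n)) : exc π ≤ n := by
  have := Finset.card_le_univ (Finset.univ.filter fun i => i < π i)
  simpa [exc] using this

lemma cyc_iota {n : ℕ} (e : Perm (Fin n)) : cyc (iota e) = cyc e + 1 := by
  rw [cyc_eq_sub, cyc_eq_sub, cycleType_iota, card_support_iota]
  have := support_le_n e
  omega

lemma decomposeFin_eq_swap_mul {n : ℕ} (p : Fin (n + 1)) (e : Perm (Fin n)) :
    Equiv.Perm.decomposeFin.symm (p, e) = swap 0 p * iota e := by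
  ext z
  induction z using Fin.cases with
  | zero =>
    rw [Equiv.Perm.decomposeFin_symm_apply_zero, Perm.mul_apply, iota_zero, swap_apply_left]
  | succ x =>
    rw [Equiv.Perm.decomposeFin_symm_apply_succ, Perm.mul_apply, iota_succ]

lemma cyc_decompose_succ {n : ℕ} (j : Fin n) (e : Perm (Fin n)) :
    cyc (Equiv.Perm.decomposeFin.symm (j.succ, e)) = cyc e := by
  rw [decomposeFin_eq_swap_mul]
  have h := cyc_merge (f := iota e) (a := (0 : Fin (n + 1))) (b := j.succ)
    (iota_zero e) (Ne.symm (Fin.succ_ne_zero j))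
  rw [cycleType_iota, card_support_iota] at h
  have h2 := cyc_eq_sub (swap (0 : Fin (n + 1)) j.succ * iota e)
  have h3 := cyc_eq_sub e
  have h4 := support_le_n e
  simp only [Fintype.card_fin] at h
  omega

lemma exc_iota {n : ℕ} (e : Perm (Fin n)) : exc (iota e) = exc e := by
  rw [exc, exc, Finset.card_filter, Finset.card_filter, Fin.sum_univ_succ]
  simp [iota_zero, iota_succ, Fin.succ_lt_succ_iff]

lemma decompose_succ_apply {n : ℕ} (j : Fin n) (e : Perm (Fin n)) (x : Fin n) :
    Equiv.Perm.decomposeFin.symm (j.succ, e) x.succ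
      = if e x = j then 0 else (e x).succ := by
  rw [Equiv.Perm.decomposeFin_symm_apply_succ]
  by_cases h : e x = j
  · rw [if_pos h, h, swap_apply_right]
  · rw [if_neg h, swap_apply_of_ne_of_ne (Fin.succ_ne_zero _) (fun hh => h (Fin.succ_inj.mp hh))]

lemma exc_decompose_succ {n : ℕ} (j : Fin n) (e : Perm (Fin n)) :
    exc (Equiv.Perm.decomposeFin.symm (j.succ, e)) + (if e.symm j < j then 1 else 0)
      = exc e + 1 := by
  have hx0 : e (e.symm j) = j := e.apply_symm_apply j
  rw [exc, exc, Finset.card_filter, Finset.card_filter, Fin.sum_univ_succ]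
  have h0 : ((if (0 : Fin (n + 1)) < Equiv.Perm.decomposeFin.symm (j.succ, e) 0 then 1 else 0) : ℕ) = 1 := by
    rw [Equiv.Perm.decomposeFin_symm_apply_zero, if_pos (Fin.succ_pos j)]
  rw [h0]
  have hterm : ∀ x : Fin n,
      ((if x.succ < Equiv.Perm.decomposeFin.symm (j.succ, e) x.succ then 1 else 0) : ℕ)
        = if e x = j then 0 else (if x < e x then 1 else 0) := by
    intro x
    rw [decompose_succ_apply]
    by_cases h : e x = j
    · rw [if_pos h, if_pos h, if_neg (by simp)]
    · rw [if_neg h, if_neg h]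
      simp [Fin.succ_lt_succ_iff]
  rw [Finset.sum_congr rfl (fun x _ => hterm x)]
  have hsplitL :
      (∑ x : Fin n, if e x = j then 0 else (if x < e x then (1 : ℕ) else 0))
        = ∑ x ∈ Finset.univ.erase (e.symm j), (if x < e x then 1 else 0) := by
    rw [← Finset.add_sum_erase _ _ (Finset.mem_univ (e.symm j)), if_pos hx0]
    rw [zero_add]
    refine Finset.sum_congr rfl fun x hx => ?_
    have hxj : e x ≠ j := by
      intro h
      exact (Finset.mem_erase.mp hx).1 (by rw [← h, Equiv.symm_apply_apply])
    rw [if_neg hxj]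
  have hsplitR :
      (∑ x : Fin n, if x < e x then (1 : ℕ) else 0)
        = (if e.symm j < j then 1 else 0)
          + ∑ x ∈ Finset.univ.erase (e.symm j), (if x < e x then 1 else 0) := by
    rw [← Finset.add_sum_erase _ _ (Finset.mem_univ (e.symm j)), hx0]
  rw [hsplitL, hsplitR]
  omega

lemma exc_decompose_succ_eq {n : ℕ} (j : Fin n) (e : Perm (Fin n)) :
    exc (Equiv.Perm.decomposeFin.symm (j.succ, e))
      = if e.symm j < j then exc e else exc e + 1 := by
  have h := exc_decompose_succ j e
  by_cases hlt : e.symm j < j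
  · rw [if_pos hlt] at h ⊢; omega
  · rw [if_neg hlt] at h ⊢; omega

lemma Aek_succ_sum (k n : ℕ) :
    Aek k (n + 1) = ∑ e : Perm (Fin n),
      (C ((k : ℤ) ^ (n - cyc e)) * X ^ exc e
        + C ((k : ℤ) ^ (n + 1 - cyc e)) *
          ((exc e) • X ^ exc e + (n - exc e) • X ^ (exc e + 1))) := by
  rw [Aek]
  rw [← Equiv.sum_comp (Equiv.Perm.decomposeFin.symm :
        _ ≃ Perm (Fin (n + 1)))
      (fun π => C ((k : ℤ) ^ (n + 1 - cyc π)) * X ^ exc π)]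
  rw [Fintype.sum_prod_type, Finset.sum_comm]
  refine Finset.sum_congr rfl fun e _ => ?_
  rw [Fin.sum_univ_succ]
  have h0 : C ((k : ℤ) ^ (n + 1 - cyc (Equiv.Perm.decomposeFin.symm (0, e))))
      * X ^ exc (Equiv.Perm.decomposeFin.symm (0, e))
      = C ((k : ℤ) ^ (n - cyc e)) * X ^ exc e := by
    have hc : cyc (Equiv.Perm.decomposeFin.symm ((0 : Fin (n + 1)), e)) = cyc e + 1 := cyc_iota e
    have he : exc (Equiv.Perm.decomposeFin.symm ((0 : Fin (n + 1)), e)) = exc e := exc_iota e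
    rw [hc, he, Nat.succ_sub_succ]
  rw [h0]
  congr 1
  -- the inner sum over j
  have hterm : ∀ j : Fin n,
      C ((k : ℤ) ^ (n + 1 - cyc (Equiv.Perm.decomposeFin.symm (j.succ, e))))
        * X ^ exc (Equiv.Perm.decomposeFin.symm (j.succ, e))
      = C ((k : ℤ) ^ (n + 1 - cyc e)) *
          (if e.symm j < j then X ^ exc e else X ^ (exc e + 1)) := by
    intro j
    rw [cyc_decompose_succ, exc_decompose_succ_eq]
    by_cases hlt : e.symm j < j
    · rw [if_pos hlt, if_pos hlt]
    · rw [if_neg hlt, if_neg hlt]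
  rw [Finset.sum_congr rfl (fun j _ => hterm j), ← Finset.mul_sum]
  congr 1
  rw [← Equiv.sum_comp e (fun j => if e.symm j < j then (X : Polynomial ℤ) ^ exc e
      else X ^ (exc e + 1))]
  have hterm2 : ∀ i : Fin n,
      (if e.symm (e i) < e i then (X : Polynomial ℤ) ^ exc e else X ^ (exc e + 1))
        = if i < e i then X ^ exc e else X ^ (exc e + 1) := by
    intro i
    rw [e.symm_apply_apply]
  rw [Finset.sum_congr rfl (fun i _ => hterm2 i), Finset.sum_ite, Finset.sum_const,
    Finset.sum_const]
  have hcard1 : (Finset.univ.filter fun i => i < e i).card = exc e := rfl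
  have hcard2 : (Finset.univ.filter fun i => ¬ i < e i).card = n - exc e := by
    have h := Finset.card_filter_add_card_filter_not
      (s := (Finset.univ : Finset (Fin n))) (p := fun i => i < e i)
    simp only [Finset.card_univ, Fintype.card_fin] at h
    rw [← hcard1]
    omega
  rw [hcard1, hcard2]

lemma X_mul_derivative_pow (a : ℤ) (m : ℕ) :
    X * derivative (C a * X ^ m) = m • (C a * X ^ m) := by
  rcases m with _ | m
  · simp
  · rw [derivative_C_mul, derivative_X_pow, Nat.add_sub_cancel, nsmul_eq_mul,
      map_natCast (C : ℤ →+* Polynomial ℤ) (m + 1)]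
    push_cast
    ring

lemma ARec (k n : ℕ) :
    Aek k (n + 1) = (1 + (n : Polynomial ℤ) * (k : Polynomial ℤ) * X) * Aek k n
      + (k : Polynomial ℤ) * ((1 - X) * (X * derivative (Aek k n))) := by
  rw [Aek_succ_sum, Aek, derivative_sum]
  conv_rhs => rw [Finset.mul_sum, Finset.mul_sum, Finset.mul_sum, Finset.mul_sum, ← Finset.sum_add_distrib]
  refine Finset.sum_congr rfl fun e _ => ?_
  have hc : cyc e ≤ n := cyc_le e
  have he : exc e ≤ n := exc_le e
  have hpow : (k : ℤ) ^ (n + 1 - cyc e) = k * (k : ℤ) ^ (n - cyc e) := by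
    rw [show n + 1 - cyc e = (n - cyc e) + 1 by omega, pow_succ]
    ring
  rw [hpow, X_mul_derivative_pow]
  simp only [nsmul_eq_mul, map_mul, map_natCast]
  rw [Nat.cast_sub he]
  push_cast
  ring

/-- The combinatorial bridge: the moments of the path model agree with the shifted
`1/k`-Eulerian polynomials. -/
lemma Aek_one (k : ℕ) : Aek k 1 = 1 := by
  rw [Aek]
  rw [Fintype.sum_subsingleton _ (1 : Equiv.Perm (Fin 1))]
  have hcyc : cyc (1 : Equiv.Perm (Fin 1)) = 1 := by
    rw [cyc, Equiv.Perm.cycleType_one]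
    simp
  have hexc : exc (1 : Equiv.Perm (Fin 1)) = 0 := by
    rw [exc]
    simp
  rw [hcyc, hexc]
  simp

lemma AekP (k : ℕ) : ∀ j, Pm k 0 j = Aek k (j + 1) := by
  intro j
  induction j with
  | zero => rw [Pm_zero, if_pos rfl, Aek_one]
  | succ j IH =>
    rw [P0rec k j, IH, ARec k (j + 1)]
    push_cast
    ring

noncomputable def cp (k n : ℕ) : Polynomial ℤ := ∏ m ∈ Finset.Icc 1 n, Lq k m

lemma cp_succ (k n : ℕ) : cp k (n + 1) = cp k n * Lq k (n + 1) := by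
  rw [cp, cp, Finset.prod_Icc_succ_top (by omega)]

section Rlem

variable (k : ℕ) (R : ℕ → Polynomial (Polynomial ℤ))
    (hR0 : R 0 = 1)
    (hR1 : R 1 = Polynomial.X - Polynomial.C ((k : Polynomial ℤ) * Polynomial.X + 1))
    (hRrec : ∀ n, 2 ≤ n → R n =
      (Polynomial.X - Polynomial.C ((n : Polynomial ℤ) * (k : Polynomial ℤ) * Polynomial.X +
          ((n : Polynomial ℤ) - 1) * (k : Polynomial ℤ) + 1)) * R (n - 1) -
      Polynomial.C (((n : Polynomial ℤ) - 1) * ((k : Polynomial ℤ) * Polynomial.X) *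
          (((n : Polynomial ℤ) - 1) * (k : Polynomial ℤ) + 1)) * R (n - 2))

include hRrec in
lemma hRrec' (n : ℕ) : R (n + 2) =
    (X - C (Bq k (n + 1))) * R (n + 1) - C (Lq k (n + 1)) * R n := by
  have h := hRrec (n + 2) (by omega)
  have h1 : n + 2 - 1 = n + 1 := rfl
  have h2 : n + 2 - 2 = n := rfl
  rw [h1, h2] at h
  rw [h]
  have hb : ((n + 2 : ℕ) : Polynomial ℤ) * (k : Polynomial ℤ) * X +
      (((n + 2 : ℕ) : Polynomial ℤ) - 1) * (k : Polynomial ℤ) + 1 = Bq k (n + 1) := by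
    rw [Bq]; push_cast; ring
  have hl : (((n + 2 : ℕ) : Polynomial ℤ) - 1) * ((k : Polynomial ℤ) * X) *
      ((((n + 2 : ℕ) : Polynomial ℤ) - 1) * (k : Polynomial ℤ) + 1) = Lq k (n + 1) := by
    rw [Lq]; push_cast; ring

  rw [hb, hl]

include hR0 hR1 hRrec in
lemma KL : ∀ n j, Lsh k (X ^ j * R n) = cp k n * Pm k n j := by
  intro n
  induction n using Nat.twoStepInduction with
  | zero =>
    intro j
    rw [hR0, mul_one, Lsh_X_pow, ← AekP]
    simp [cp]
  | one =>
    intro j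
    have hb : (k : Polynomial ℤ) * X + 1 = Bq k 0 := by rw [Bq]; push_cast; ring
    have e1 : X ^ j * R 1 = X ^ (j + 1) - C (Bq k 0) * X ^ j := by
      rw [hR1, hb]; ring
    rw [e1, Lsh_sub, Lsh_X_pow, Lsh_C_mul, Lsh_X_pow, ← AekP, ← AekP, Pm_succ_zero]
    have hc : cp k 1 = Lq k 1 := by simp [cp]
    rw [hc]; ring
  | more n IH0 IH1 =>
    intro j
    have e1 : X ^ j * R (n + 2) = X ^ (j + 1) * R (n + 1)
        - C (Bq k (n + 1)) * (X ^ j * R (n + 1)) - C (Lq k (n + 1)) * (X ^ j * R n) := by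
      rw [hRrec' k R hRrec n]; ring
    rw [e1, Lsh_sub, Lsh_sub, Lsh_C_mul, Lsh_C_mul, IH0 j, IH1 j, IH1 (j + 1),
      Pm_succ_succ, cp_succ k (n + 1), cp_succ k n]
    ring

include hR0 hR1 hRrec in
lemma monicR : ∀ n, (R n).Monic ∧ (R n).natDegree = n := by
  intro n
  induction n using Nat.twoStepInduction with
  | zero => rw [hR0]; exact ⟨monic_one, natDegree_one⟩
  | one => rw [hR1]; exact ⟨monic_X_sub_C _, natDegree_X_sub_C _⟩
  | more n IH0 IH1 =>
    rw [hRrec' k R hRrec n]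
    have hm : ((X - C (Bq k (n + 1))) * R (n + 1)).Monic :=
      (monic_X_sub_C _).mul IH1.1
    have hd : ((X - C (Bq k (n + 1))) * R (n + 1)).natDegree = n + 2 := by
      rw [(monic_X_sub_C _).natDegree_mul IH1.1, natDegree_X_sub_C, IH1.2]; omega
    have hq : (C (Lq k (n + 1)) * R n).natDegree < n + 2 := by
      calc (C (Lq k (n + 1)) * R n).natDegree ≤ (R n).natDegree := natDegree_C_mul_le _ _
      _ = n := IH0.2
      _ < n + 2 := by omega
    have hlt : (C (Lq k (n + 1)) * R n).degree < ((X - C (Bq k (n + 1))) * R (n + 1)).degree :=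
      degree_lt_degree (by omega)
    refine ⟨hm.sub_of_left hlt, ?_⟩
    rw [natDegree_sub_eq_left_of_natDegree_lt (by omega), hd]

lemma Lsh_sum {ι : Type*} (s : Finset ι) (f : ι → Polynomial (Polynomial ℤ)) :
    Lsh k (∑ i ∈ s, f i) = ∑ i ∈ s, Lsh k (f i) := by
  classical
  induction s using Finset.cons_induction with
  | empty => simp [Lsh_zero]
  | cons a s ha IH => rw [Finset.sum_cons, Lsh_add, IH, Finset.sum_cons]

include hR0 hR1 hRrec in
lemma Lsh_mul_R (n : ℕ) (q : Polynomial (Polynomial ℤ)) :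
    Lsh k (q * R n) = ∑ j ∈ q.support, q.coeff j * (cp k n * Pm k n j) := by
  conv_lhs => rw [← Polynomial.sum_monomial_eq q, Polynomial.sum_def, Finset.sum_mul,
    Lsh_sum k]
  refine Finset.sum_congr rfl fun j hj => ?_
  rw [← C_mul_X_pow_eq_monomial, mul_assoc, Lsh_C_mul, KL k R hR0 hR1 hRrec n j]

include hR0 hR1 hRrec in
lemma orth_lt (m n : ℕ) (h : m < n) : Lsh k (R m * R n) = 0 := by
  rw [Lsh_mul_R k R hR0 hR1 hRrec n (R m)]
  refine Finset.sum_eq_zero fun j hj => ?_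
  have hjm : j ≤ m := by
    have := Polynomial.le_natDegree_of_mem_supp j hj
    rwa [(monicR k R hR0 hR1 hRrec m).2] at this
  rw [Pm_eq_zero k j n (by omega)]
  ring

lemma cp_eq (k n : ℕ) : cp k n =
    (n.factorial : Polynomial ℤ) * ((k : Polynomial ℤ) * Polynomial.X) ^ n *
      ∏ j ∈ Finset.Icc 1 n, ((j : Polynomial ℤ) * (k : Polynomial ℤ) + 1) := by
  induction n with
  | zero => simp [cp]
  | succ n IH =>
    rw [cp_succ, IH, Finset.prod_Icc_succ_top (by omega : 1 ≤ n + 1), Lq,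
      Nat.factorial_succ]
    push_cast
    ring

end Rlem

theorem stmt12 (k : ℕ) (hk : 1 ≤ k) (R : ℕ → Polynomial (Polynomial ℤ))
    (hR0 : R 0 = 1)
    (hR1 : R 1 = Polynomial.X - Polynomial.C ((k : Polynomial ℤ) * Polynomial.X + 1))
    (hRrec : ∀ n, 2 ≤ n → R n =
      (Polynomial.X - Polynomial.C ((n : Polynomial ℤ) * (k : Polynomial ℤ) * Polynomial.X +
          ((n : Polynomial ℤ) - 1) * (k : Polynomial ℤ) + 1)) * R (n - 1) -
      Polynomial.C (((n : Polynomial ℤ) - 1) * ((k : Polynomial ℤ) * Polynomial.X) *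
          (((n : Polynomial ℤ) - 1) * (k : Polynomial ℤ) + 1)) * R (n - 2)) :
    (∀ m n, m ≠ n → Lsh k (R m * R n) = 0) ∧
    (∀ n, Lsh k (R n ^ 2) =
      (n.factorial : Polynomial ℤ) * ((k : Polynomial ℤ) * Polynomial.X) ^ n *
        ∏ j ∈ Finset.Icc 1 n, ((j : Polynomial ℤ) * (k : Polynomial ℤ) + 1)) := by
  constructor
  · intro m n hmn
    rcases lt_or_gt_of_ne hmn with h | h
    · exact orth_lt k R hR0 hR1 hRrec m n h
    · rw [mul_comm]
      exact orth_lt k R hR0 hR1 hRrec n m h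
  · intro n
    rw [sq, Lsh_mul_R k R hR0 hR1 hRrec n (R n), ← cp_eq k n]
    rw [Finset.sum_eq_single n]
    · have hc : (R n).coeff n = 1 := by
        have := (monicR k R hR0 hR1 hRrec n).1.coeff_natDegree
        rwa [(monicR k R hR0 hR1 hRrec n).2] at this
      rw [hc, Pm_diag]
      ring
    · intro j hj hjn
      have hjm : j ≤ n := by
        have := Polynomial.le_natDegree_of_mem_supp j hj
        rwa [(monicR k R hR0 hR1 hRrec n).2] at this
      rw [Pm_eq_zero k j n (by omega)]
      ring
    · intro hn
      rw [Polynomial.notMem_support_iff.mp hn]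
      ring
end

section
/- Let x, z be real numbers with x ≠ 1, 1 + z > 0 and 1 + xz > 0, and set w := (1/(1−x)) · Real.log((1+z)/(1+xz)). Then e^{xw} − x·e^{w} ≠ 0 and (e^{w} − e^{xw})/(e^{xw} − x·e^{w}) = z. (That is, the function f̄(z) = (1/(1−x)) ln((1+z)/(1+xz)) is a compositional inverse of f(t) = (e^{t} − e^{xt})/(e^{xt} − x e^{t}).) -/
theorem stmt16 (x z : ℝ) (hx : x ≠ 1) (hz : 0 < 1 + z) (hxz : 0 < 1 + x * z) :
    Real.exp (x * ((1 / (1 - x)) * Real.log ((1 + z) / (1 + x * z)))) -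
        x * Real.exp ((1 / (1 - x)) * Real.log ((1 + z) / (1 + x * z))) ≠ 0 ∧
    (Real.exp ((1 / (1 - x)) * Real.log ((1 + z) / (1 + x * z))) -
        Real.exp (x * ((1 / (1 - x)) * Real.log ((1 + z) / (1 + x * z))))) /
      (Real.exp (x * ((1 / (1 - x)) * Real.log ((1 + z) / (1 + x * z)))) -
        x * Real.exp ((1 / (1 - x)) * Real.log ((1 + z) / (1 + x * z)))) = z := by
  have hx1 : (1 : ℝ) - x ≠ 0 := sub_ne_zero.mpr (Ne.symm hx)
  set w : ℝ := (1 / (1 - x)) * Real.log ((1 + z) / (1 + x * z)) with hw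
  have hr : (0 : ℝ) < (1 + z) / (1 + x * z) := div_pos hz hxz
  have key : Real.exp w = Real.exp (x * w) * ((1 + z) / (1 + x * z)) := by
    have h1 : w = x * w + (1 - x) * w := by ring
    have h2 : (1 - x) * w = Real.log ((1 + z) / (1 + x * z)) := by
      rw [hw]; field_simp
    conv_lhs => rw [h1]
    rw [Real.exp_add, h2, Real.exp_log hr]
  have hd : Real.exp (x * w) - x * Real.exp w
      = Real.exp (x * w) * ((1 - x) / (1 + x * z)) := by
    rw [key]; field_simp; ring
  have hdne : Real.exp (x * w) - x * Real.exp w ≠ 0 := by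
    rw [hd]
    exact mul_ne_zero (Real.exp_ne_zero _)
      (div_ne_zero hx1 (ne_of_gt hxz))
  refine ⟨hdne, ?_⟩
  have hn : Real.exp w - Real.exp (x * w)
      = Real.exp (x * w) * (z * (1 - x) / (1 + x * z)) := by
    rw [key]; field_simp; ring
  rw [hn, hd]
  field_simp
end

section
/- Let x, z be real numbers with x ≠ 1, 1 + z > 0 and 1 + xz > 0, set w := (1/(1−x)) · Real.log((1+z)/(1+xz)), and let f : ℝ → ℝ be given by f(t) = (e^{t} − e^{xt})/(e^{xt} − x·e^{t}). Then f is differentiable at w and deriv f w = (1+z)(1+xz). (That is, the A-function of the exponential Riordan array is A(z) = f'(f̄(z)) = (1+z)(1+xz).) -/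
theorem stmt17 (x z : ℝ) (hx : x ≠ 1) (hz : 0 < 1 + z) (hxz : 0 < 1 + x * z)
    (w : ℝ) (hw : w = (1 / (1 - x)) * Real.log ((1 + z) / (1 + x * z)))
    (f : ℝ → ℝ)
    (hf : f = fun t => (Real.exp t - Real.exp (x * t)) /
      (Real.exp (x * t) - x * Real.exp t)) :
    DifferentiableAt ℝ f w ∧ deriv f w = (1 + z) * (1 + x * z) := by
  have h1x : (1 : ℝ) - x ≠ 0 := sub_ne_zero.mpr hx.symm
  have hb : Real.exp (x * w) ≠ 0 := Real.exp_ne_zero _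
  have hzz : (1 + z) / (1 + x * z) > 0 := div_pos hz hxz
  have hu : Real.exp w = (1 + z) / (1 + x * z) * Real.exp (x * w) := by
    have h1 : Real.exp (w - x * w) = (1 + z) / (1 + x * z) := by
      have : w - x * w = Real.log ((1 + z) / (1 + x * z)) := by
        rw [hw]; field_simp
      rw [this, Real.exp_log hzz]
    calc Real.exp w = Real.exp (w - x * w + x * w) := by ring_nf
      _ = Real.exp (w - x * w) * Real.exp (x * w) := Real.exp_add _ _
      _ = (1 + z) / (1 + x * z) * Real.exp (x * w) := by rw [h1]
  have hD : Real.exp (x * w) - x * Real.exp w ≠ 0 := by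
    rw [hu]
    have heq : Real.exp (x * w) - x * ((1 + z) / (1 + x * z) * Real.exp (x * w))
        = Real.exp (x * w) * ((1 - x) / (1 + x * z)) := by
      field_simp; ring
    rw [heq]
    exact mul_ne_zero hb (div_ne_zero h1x hxz.ne')
  have hlin : HasDerivAt (fun t : ℝ => x * t) x w := by
    simpa using (hasDerivAt_id w).const_mul x
  have hex : HasDerivAt (fun t : ℝ => Real.exp (x * t)) (Real.exp (x * w) * x) w :=
    (Real.hasDerivAt_exp (x * w)).comp w hlin
  have hN : HasDerivAt (fun t : ℝ => Real.exp t - Real.exp (x * t))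
      (Real.exp w - Real.exp (x * w) * x) w :=
    (Real.hasDerivAt_exp w).sub hex
  have hDh : HasDerivAt (fun t : ℝ => Real.exp (x * t) - x * Real.exp t)
      (Real.exp (x * w) * x - x * Real.exp w) w :=
    hex.sub ((Real.hasDerivAt_exp w).const_mul x)
  have hdiv := hN.div hDh hD
  rw [hf]
  refine ⟨hdiv.differentiableAt, ?_⟩
  rw [show deriv (fun t => (Real.exp t - Real.exp (x * t)) / (Real.exp (x * t) - x * Real.exp t)) w = _ from hdiv.deriv, div_eq_iff (pow_ne_zero 2 hD), hu]
  field_simp [(by rw [mul_comm]; exact hxz.ne' : (1 : ℝ) + z * x ≠ 0)]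
  ring
end

section
/- Let x, z be real numbers with x ≠ 1, 1 + z > 0 and 1 + xz > 0, set w := (1/(1−x)) · Real.log((1+z)/(1+xz)), and let h : ℝ → ℝ be given by h(t) = e^{t(x−1)} − x. Then h(w) = (1−x)/(1+z) (in particular h(w) ≠ 0) and −(deriv h w)/h(w) = 1 + xz. (Consequently, for g(t) = ((1−x)/h(t))^{y} one has Z(z) = g'(f̄(z))/g(f̄(z)) = y(1+xz), the Z-function computation of the production matrix.) -/
theorem stmt18 (x z : ℝ) (hx : x ≠ 1) (hz : 0 < 1 + z) (hxz : 0 < 1 + x * z)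
    (w : ℝ) (hw : w = (1 / (1 - x)) * Real.log ((1 + z) / (1 + x * z)))
    (h : ℝ → ℝ) (hh : h = fun t => Real.exp (t * (x - 1)) - x) :
    h w = (1 - x) / (1 + z) ∧ -(deriv h w) / h w = 1 + x * z := by
  have hx1 : (1 : ℝ) - x ≠ 0 := sub_ne_zero.mpr (Ne.symm hx)
  have hwe : w * (x - 1) = -Real.log ((1 + z) / (1 + x * z)) := by
    rw [hw]; field_simp; ring
  have hexp : Real.exp (w * (x - 1)) = (1 + x * z) / (1 + z) := by
    rw [hwe, Real.exp_neg, Real.exp_log (by positivity)]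
    exact inv_div _ _
  have hhw : h w = (1 - x) / (1 + z) := by
    rw [hh]; simp only [hexp]
    field_simp; ring
  refine ⟨hhw, ?_⟩
  have hderiv : deriv h w = (x - 1) * Real.exp (w * (x - 1)) := by
    rw [hh]
    have : HasDerivAt (fun t : ℝ => Real.exp (t * (x - 1)) - x)
        ((x - 1) * Real.exp (w * (x - 1))) w := by
      have := ((hasDerivAt_id w).mul_const (x - 1)).exp
      simpa [mul_comm] using this.sub_const x
    exact this.deriv
  rw [hderiv, hexp, hhw]
  field_simp
  ring
end
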